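/- arXiv:math/0508213 — 4 statements merged into one kernel-verified Lean document; each statement's English description precedes it below -/
import Mathlib

section
/- Let X₁,…,Xₙ be i.i.d. real random variables and Y₁,…,Yₙ be i.i.d. real random variables, with the two families independent of each other, E[X₁] = E[Y₁] = 0, E[X₁²] = E[Y₁²] = 1, and γ := max{E|X₁|³, E|Y₁|³} < ∞. Let U = max_{1≤i≤n} n^{-1/2} Σ_{j=1}^{i} X_j and V = max_{1≤i≤n} n^{-1/2} Σ_{j=1}^{i} Y_j. Then for every thrice differentiable g : ℝ → ℝ with bounded first three derivatives, |E g(U) − E g(V)| ≤ K(g) [ γ^{1/3} n^{-1/6} (log n)^{2/3} + γ n^{-1/2} ], where K(g) = (19/3)‖g′‖∞ + 13‖g″‖∞ + (13/3)‖g‴‖∞. -/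
/-!
Replace the maximum by the smooth maximum `log (∑ i, exp (t * v i)) / t`, which exceeds it by at
most `log n / t`; this costs `2 B₁ log n / t`. Then swap the increments `X j` for `Y j` one at a
time (Lindeberg). As a function of the increment `x` being swapped, the smooth maximum of the
partial sums is `log (A + B * exp (t * c * x)) / t` with `A, B ≥ 0` independent of `x`, and its
composition with `g` has third derivative at most `c ^ 3 * (B₃ + 3 t B₂ + t ^ 2 B₁)`, because
`x ↦ B e^{tx} / (A + B e^{tx})` solves the logistic equation `p' = t p (1 - p)`. Since the first two
moments agree, each swap costs at most this times `2 γ`. The choice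
`t = γ^{-1/3} n^{1/6} (log n)^{1/3}` balances the two errors.
-/

open MeasureTheory ProbabilityTheory Finset Function

lemma abs_le_mul_abs_pow_of_hasDerivAt {f f' : ℝ → ℝ} {C : ℝ} {k : ℕ}
    (hf : ∀ s, HasDerivAt f (f' s) s) (hf0 : f 0 = 0) (hf' : ∀ s, |f' s| ≤ C * |s| ^ k)
    (x : ℝ) : |f x| ≤ C * |x| ^ (k + 1) := by
  have hC : 0 ≤ C := by simpa using (abs_nonneg _).trans (hf' 1)
  have hbound : ∀ s ∈ Set.uIcc 0 x, ‖f' s‖ ≤ C * |x| ^ k := fun s hs => by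
    have hsx : |s| ≤ |x| := by simpa using Set.abs_sub_left_of_mem_uIcc hs
    exact (hf' s).trans (by gcongr)
  have := (convex_uIcc (0 : ℝ) x).norm_image_sub_le_of_norm_hasDerivWithin_le
    (fun s _ => (hf s).hasDerivWithinAt) hbound Set.left_mem_uIcc Set.right_mem_uIcc
  simpa [hf0, pow_succ, mul_assoc] using this

-- Crude (the sharp constant is `M / 6`), but enough for the constants of the final bound.
lemma abs_taylor_two_le {h h₁ h₂ h₃ : ℝ → ℝ} {M : ℝ}
    (hd : ∀ s, HasDerivAt h (h₁ s) s) (hd₁ : ∀ s, HasDerivAt h₁ (h₂ s) s)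
    (hd₂ : ∀ s, HasDerivAt h₂ (h₃ s) s) (hM : ∀ s, |h₃ s| ≤ M) (x : ℝ) :
    |h x - h 0 - h₁ 0 * x - h₂ 0 * x ^ 2 / 2| ≤ M * |x| ^ 3 := by
  have e₂ := abs_le_mul_abs_pow_of_hasDerivAt (f := fun s => h₂ s - h₂ 0) (k := 0)
    (fun s => (hd₂ s).sub_const _) (sub_self _) (by simpa using hM)
  have e₁ := abs_le_mul_abs_pow_of_hasDerivAt (f := fun s => h₁ s - h₁ 0 - h₂ 0 * s)
    (fun s => (((hd₁ s).sub_const _).sub ((hasDerivAt_id' s).const_mul (h₂ 0))).congr_deriv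
      (by ring))
    (by simp) e₂
  have e₀ := abs_le_mul_abs_pow_of_hasDerivAt
    (f := fun s => h s - h 0 - h₁ 0 * s - h₂ 0 * s ^ 2 / 2)
    (fun s => ((((hd s).sub_const _).sub ((hasDerivAt_id' s).const_mul (h₁ 0))).sub
      (((hasDerivAt_pow 2 s).const_mul (h₂ 0)).div_const 2)).congr_deriv (by push_cast; ring))
    (by simp) e₁ x
  simpa using e₀

lemma abs_mul_le_of_abs_le_one {u v B : ℝ} (hu : |u| ≤ B) (hv : |v| ≤ 1) : |u * v| ≤ B :=
  (abs_mul u v).trans_le ((mul_le_of_le_one_right (abs_nonneg u) hv).trans hu)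

lemma abs_sub_le_of_abs_deriv_le {g : ℝ → ℝ} {B : ℝ} (hg : Differentiable ℝ g)
    (hB : ∀ y, |deriv g y| ≤ B) (x y : ℝ) : |g x - g y| ≤ B * |x - y| := by
  simpa [Real.norm_eq_abs] using convex_univ.norm_image_sub_le_of_norm_deriv_le
    (fun z _ => hg z) (fun z _ => (hB z).trans_eq' (Real.norm_eq_abs _)) (Set.mem_univ y)
    (Set.mem_univ x)

lemma abs_taylor_comp_le_of_logistic {g φ p : ℝ → ℝ} {t B₁ B₂ B₃ : ℝ} (ht : 0 ≤ t)
    (hg₀ : Differentiable ℝ g) (hg₁ : Differentiable ℝ (deriv g))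
    (hg₂ : Differentiable ℝ (deriv (deriv g)))
    (hB₁ : ∀ y, |deriv g y| ≤ B₁) (hB₂ : ∀ y, |deriv (deriv g) y| ≤ B₂)
    (hB₃ : ∀ y, |deriv (deriv (deriv g)) y| ≤ B₃)
    (hφ : ∀ s, HasDerivAt φ (p s) s) (hp : ∀ s, HasDerivAt p (t * p s * (1 - p s)) s)
    (hp01 : ∀ s, p s ∈ Set.Icc (0 : ℝ) 1) (x : ℝ) :
    |g (φ x) - g (φ 0) - deriv g (φ 0) * p 0 * x
        - (deriv (deriv g) (φ 0) * p 0 ^ 2 + deriv g (φ 0) * (t * p 0 * (1 - p 0))) * x ^ 2 / 2|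
      ≤ (B₃ + 3 * t * B₂ + t ^ 2 * B₁) * |x| ^ 3 := by
  have hcomp : ∀ {F : ℝ → ℝ}, Differentiable ℝ F → ∀ s,
      HasDerivAt (fun y => F (φ y)) (deriv F (φ s) * p s) s :=
    fun hF s => (hF (φ s)).hasDerivAt.comp s (hφ s)
  refine abs_taylor_two_le (h₁ := fun s => deriv g (φ s) * p s)
    (h₂ := fun s => deriv (deriv g) (φ s) * p s ^ 2 + deriv g (φ s) * (t * p s * (1 - p s)))
    (h₃ := fun s => deriv (deriv (deriv g)) (φ s) * p s ^ 3
      + 3 * t * (deriv (deriv g) (φ s) * (p s ^ 2 * (1 - p s)))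
      + t ^ 2 * (deriv g (φ s) * (p s * (1 - p s) * (1 - 2 * p s))))
    (fun s => hcomp hg₀ s) (fun s => ?_) (fun s => ?_) (fun s => ?_) x
  · exact ((hcomp hg₁ s).mul (hp s)).congr_deriv (by ring)
  · exact (((hcomp hg₂ s).mul ((hp s).pow 2)).add
      ((hcomp hg₁ s).mul (((hp s).const_mul t).mul ((hp s).const_sub 1)))).congr_deriv
      (by simp only [Pi.pow_apply, Pi.mul_apply]; ring)
  · obtain ⟨hp0, hp1⟩ := hp01 s
    have q₃ : |p s ^ 3| ≤ 1 := abs_le.2 ⟨by nlinarith [pow_nonneg hp0 3], pow_le_one₀ hp0 hp1⟩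
    have q₂ : |p s ^ 2 * (1 - p s)| ≤ 1 := abs_le.2 ⟨by nlinarith, by nlinarith⟩
    have q₁ : |p s * (1 - p s) * (1 - 2 * p s)| ≤ 1 := abs_le.2 ⟨by nlinarith, by nlinarith⟩
    refine (abs_add_three _ _ _).trans (add_le_add (add_le_add ?_ ?_) ?_)
    · exact abs_mul_le_of_abs_le_one (hB₃ _) q₃
    · rw [abs_mul, abs_of_nonneg (by positivity)]
      exact mul_le_mul_of_nonneg_left (abs_mul_le_of_abs_le_one (hB₂ _) q₂) (by positivity)
    · rw [abs_mul, abs_of_nonneg (by positivity)]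
      exact mul_le_mul_of_nonneg_left (abs_mul_le_of_abs_le_one (hB₁ _) q₁) (by positivity)

section LogAddExp

variable {A B t : ℝ}

lemma div_add_mem_Icc (hA : 0 ≤ A) (hB : 0 < B) : B / (A + B) ∈ Set.Icc (0 : ℝ) 1 :=
  ⟨by positivity, (div_le_one (by positivity)).2 (by linarith)⟩

lemma hasDerivAt_log_add_mul_exp_div (hA : 0 ≤ A) (hB : 0 < B) (ht : t ≠ 0) (x : ℝ) :
    HasDerivAt (fun s => Real.log (A + B * Real.exp (t * s)) / t)
      (B * Real.exp (t * x) / (A + B * Real.exp (t * x))) x := by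
  have hpos : 0 < A + B * Real.exp (t * x) := by positivity
  have hexp := ((hasDerivAt_id' x).const_mul t).exp.const_mul B |>.const_add A
  refine ((hexp.log hpos.ne').div_const t).congr_deriv ?_
  field_simp

lemma hasDerivAt_mul_exp_div_add (hA : 0 ≤ A) (hB : 0 < B) (x : ℝ) :
    HasDerivAt (fun s => B * Real.exp (t * s) / (A + B * Real.exp (t * s)))
      (t * (B * Real.exp (t * x) / (A + B * Real.exp (t * x)))
        * (1 - B * Real.exp (t * x) / (A + B * Real.exp (t * x)))) x := by
  have hpos : 0 < A + B * Real.exp (t * x) := by positivity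
  have hexp := ((hasDerivAt_id' x).const_mul t).exp.const_mul B
  refine (hexp.div (hexp.const_add A) hpos.ne').congr_deriv ?_
  field_simp

-- The first two derivatives at `0` of `x ↦ g (log (A + B * exp (t * x)) / t)`.
noncomputable def softmaxTaylorCoeff₁ (g : ℝ → ℝ) (t A B : ℝ) : ℝ :=
  deriv g (Real.log (A + B) / t) * (B / (A + B))

noncomputable def softmaxTaylorCoeff₂ (g : ℝ → ℝ) (t A B : ℝ) : ℝ :=
  deriv (deriv g) (Real.log (A + B) / t) * (B / (A + B)) ^ 2
    + deriv g (Real.log (A + B) / t) * (t * (B / (A + B)) * (1 - B / (A + B)))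

variable {g : ℝ → ℝ} {B₁ B₂ B₃ : ℝ}

lemma abs_taylor_comp_log_add_mul_exp_le (hA : 0 ≤ A) (hB : 0 < B) (ht : 0 < t)
    (hg₀ : Differentiable ℝ g) (hg₁ : Differentiable ℝ (deriv g))
    (hg₂ : Differentiable ℝ (deriv (deriv g)))
    (hB₁ : ∀ y, |deriv g y| ≤ B₁) (hB₂ : ∀ y, |deriv (deriv g) y| ≤ B₂)
    (hB₃ : ∀ y, |deriv (deriv (deriv g)) y| ≤ B₃) (x : ℝ) :
    |g (Real.log (A + B * Real.exp (t * x)) / t) - g (Real.log (A + B) / t)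
        - softmaxTaylorCoeff₁ g t A B * x - softmaxTaylorCoeff₂ g t A B * x ^ 2 / 2|
      ≤ (B₃ + 3 * t * B₂ + t ^ 2 * B₁) * |x| ^ 3 := by
  simpa [softmaxTaylorCoeff₁, softmaxTaylorCoeff₂, mul_assoc] using
    abs_taylor_comp_le_of_logistic ht.le hg₀ hg₁ hg₂ hB₁ hB₂ hB₃
      (hasDerivAt_log_add_mul_exp_div hA hB ht.ne') (hasDerivAt_mul_exp_div_add hA hB)
      (fun s => div_add_mem_Icc hA (by positivity)) x

lemma abs_softmaxTaylorCoeff₁_le (hA : 0 ≤ A) (hB : 0 < B) (hB₁ : ∀ y, |deriv g y| ≤ B₁) :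
    |softmaxTaylorCoeff₁ g t A B| ≤ B₁ := by
  obtain ⟨hP₀, hP₁⟩ := div_add_mem_Icc hA hB
  exact abs_mul_le_of_abs_le_one (hB₁ _) (by rwa [abs_of_nonneg hP₀])

lemma abs_softmaxTaylorCoeff₂_le (hA : 0 ≤ A) (hB : 0 < B) (ht : 0 ≤ t)
    (hB₁ : ∀ y, |deriv g y| ≤ B₁) (hB₂ : ∀ y, |deriv (deriv g) y| ≤ B₂) :
    |softmaxTaylorCoeff₂ g t A B| ≤ B₂ + t * B₁ := by
  obtain ⟨hP₀, hP₁⟩ := div_add_mem_Icc hA hB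
  set P := B / (A + B)
  set d := deriv g (Real.log (A + B) / t)
  have hP : |P * (1 - P)| ≤ 1 := abs_le.2 ⟨by nlinarith, by nlinarith⟩
  refine (abs_add_le _ _).trans (add_le_add (abs_mul_le_of_abs_le_one (hB₂ _) ?_) ?_)
  · rw [abs_of_nonneg (by positivity)]
    exact pow_le_one₀ hP₀ hP₁
  · rw [show d * (t * P * (1 - P)) = t * (d * (P * (1 - P))) by ring, abs_mul, abs_of_nonneg ht]
    exact mul_le_mul_of_nonneg_left (abs_mul_le_of_abs_le_one (hB₁ _) hP) ht

end LogAddExp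

section SmoothMax

variable {ι : Type*} [Fintype ι]

noncomputable def smoothMax (t : ℝ) (v : ι → ℝ) : ℝ :=
  Real.log (∑ i, Real.exp (t * v i)) / t

variable [Nonempty ι] {t : ℝ}

lemma iSup_le_smoothMax (ht : 0 < t) (v : ι → ℝ) : ⨆ i, v i ≤ smoothMax t v := by
  obtain ⟨i₀, hi₀⟩ := Finite.exists_max v
  rw [le_antisymm (ciSup_le hi₀) (le_ciSup (Finite.bddAbove_range v) i₀), smoothMax,
    le_div_iff₀ ht, mul_comm, Real.le_log_iff_exp_le (by positivity)]
  exact single_le_sum (f := fun i => Real.exp (t * v i)) (fun i _ => (Real.exp_pos _).le)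
    (mem_univ i₀)

lemma smoothMax_le (ht : 0 < t) (v : ι → ℝ) :
    smoothMax t v ≤ (⨆ i, v i) + Real.log (Fintype.card ι) / t := by
  have hsum : ∑ i, Real.exp (t * v i) ≤ Fintype.card ι * Real.exp (t * ⨆ i, v i) := by
    simpa using sum_le_sum fun i (_ : i ∈ univ) => Real.exp_le_exp.2
      (mul_le_mul_of_nonneg_left (le_ciSup (Finite.bddAbove_range v) i) ht.le)
  have hlog : Real.log (∑ i, Real.exp (t * v i)) ≤ Real.log (Fintype.card ι) + t * ⨆ i, v i := by
    rw [← Real.log_exp (t * ⨆ i, v i), ← Real.log_mul (by simp) (by positivity)]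
    exact Real.log_le_log (by positivity) hsum
  rw [smoothMax, div_le_iff₀ ht, add_mul, div_mul_cancel₀ _ ht.ne']
  linarith

lemma abs_smoothMax_le (ht : 0 < t) (v : ι → ℝ) :
    |smoothMax t v| ≤ (∑ i, |v i|) + Real.log (Fintype.card ι) / t := by
  have hv : ∀ i, |v i| ≤ ∑ j, |v j| := fun i =>
    single_le_sum (f := fun j => |v j|) (fun j _ => abs_nonneg _) (mem_univ i)
  have hlog : 0 ≤ Real.log (Fintype.card ι) / t :=
    div_nonneg (Real.log_nonneg (by exact_mod_cast Fintype.card_pos)) ht.le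
  obtain ⟨i₀⟩ := ‹Nonempty ι›
  have hlow := (le_ciSup (Finite.bddAbove_range v) i₀).trans (iSup_le_smoothMax ht v)
  have hup : ⨆ i, v i ≤ ∑ j, |v j| := ciSup_le fun i => (le_abs_self _).trans (hv i)
  rw [abs_le]
  constructor <;> linarith [neg_abs_le (v i₀), hv i₀, smoothMax_le ht v]

lemma abs_comp_iSup_sub_comp_smoothMax_le {g : ℝ → ℝ} {B₁ : ℝ} (hg : Differentiable ℝ g)
    (hB₁ : ∀ y, |deriv g y| ≤ B₁) (ht : 0 < t) (v : ι → ℝ) :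
    |g (⨆ i, v i) - g (smoothMax t v)| ≤ B₁ * (Real.log (Fintype.card ι) / t) := by
  have hdist : |(⨆ i, v i) - smoothMax t v| ≤ Real.log (Fintype.card ι) / t := by
    rw [abs_sub_comm, abs_le]
    constructor <;> linarith [iSup_le_smoothMax ht v, smoothMax_le ht v]
  exact (abs_sub_le_of_abs_deriv_le hg hB₁ _ _).trans
    (mul_le_mul_of_nonneg_left hdist ((abs_nonneg _).trans (hB₁ 0)))

end SmoothMax

section PartialSums

variable {ι : Type*} [Fintype ι] [LinearOrder ι] [LocallyFiniteOrderBot ι]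

noncomputable def expPartialSumBelow (a : ℝ) (κ : ι) (z : ι → ℝ) : ℝ :=
  ∑ i with i < κ, Real.exp (a * ∑ j ∈ Iic i, update z κ 0 j)

noncomputable def expPartialSumFrom (a : ℝ) (κ : ι) (z : ι → ℝ) : ℝ :=
  ∑ i with κ ≤ i, Real.exp (a * ∑ j ∈ Iic i, update z κ 0 j)

lemma expPartialSumBelow_nonneg (a : ℝ) (κ : ι) (z : ι → ℝ) :
    0 ≤ expPartialSumBelow a κ z :=
  sum_nonneg fun _ _ => (Real.exp_pos _).le

lemma expPartialSumFrom_pos (a : ℝ) (κ : ι) (z : ι → ℝ) : 0 < expPartialSumFrom a κ z :=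
  sum_pos (fun _ _ => Real.exp_pos _) ⟨κ, by simp⟩

lemma sum_exp_mul_sum_Iic_update (a : ℝ) (z : ι → ℝ) (κ : ι) (x : ℝ) :
    ∑ i, Real.exp (a * ∑ j ∈ Iic i, update z κ x j)
      = expPartialSumBelow a κ z + expPartialSumFrom a κ z * Real.exp (a * x) := by
  have hupdate : update z κ x = update z κ 0 + Pi.single κ x := by
    ext j; by_cases hj : j = κ <;> simp [hj]
  have hsum : ∀ i, ∑ j ∈ Iic i, update z κ x j
      = ∑ j ∈ Iic i, update z κ 0 j + if κ ≤ i then x else 0 := fun i => by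
    simp [hupdate, sum_add_distrib, sum_pi_single']
  rw [← sum_filter_add_sum_filter_not univ (· < κ), expPartialSumBelow, expPartialSumFrom,
    sum_mul]
  simp only [not_lt]
  congr 1 <;> refine sum_congr rfl fun i hi => ?_ <;> rw [hsum]
  · simp [not_le.2 (mem_filter.1 hi).2]
  · simp [(mem_filter.1 hi).2, mul_add, Real.exp_add]

end PartialSums

section PartialSumTaylor

variable {n : ℕ} {g : ℝ → ℝ} {B₁ B₂ B₃ t c : ℝ}

lemma smoothMax_mul_sum_Iic_update (z : Fin n → ℝ) (κ : Fin n) (x : ℝ) :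
    smoothMax t (fun i => c * ∑ j ∈ Iic i, update z κ x j)
      = Real.log (expPartialSumBelow (t * c) κ z
          + expPartialSumFrom (t * c) κ z * Real.exp (t * (c * x))) / t := by
  simp only [smoothMax, ← mul_assoc, sum_exp_mul_sum_Iic_update]

lemma abs_taylor_comp_smoothMax_update_le (ht : 0 < t) (hc : 0 ≤ c)
    (hg₀ : Differentiable ℝ g) (hg₁ : Differentiable ℝ (deriv g))
    (hg₂ : Differentiable ℝ (deriv (deriv g)))
    (hB₁ : ∀ y, |deriv g y| ≤ B₁) (hB₂ : ∀ y, |deriv (deriv g) y| ≤ B₂)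
    (hB₃ : ∀ y, |deriv (deriv (deriv g)) y| ≤ B₃) (κ : Fin n) (z : Fin n → ℝ) (x : ℝ) :
    |g (smoothMax t fun i => c * ∑ j ∈ Iic i, update z κ x j)
        - g (smoothMax t fun i => c * ∑ j ∈ Iic i, update z κ 0 j)
        - c * softmaxTaylorCoeff₁ g t (expPartialSumBelow (t * c) κ z)
            (expPartialSumFrom (t * c) κ z) * x
        - c ^ 2 * softmaxTaylorCoeff₂ g t (expPartialSumBelow (t * c) κ z)
            (expPartialSumFrom (t * c) κ z) * x ^ 2 / 2|
      ≤ (B₃ + 3 * t * B₂ + t ^ 2 * B₁) * c ^ 3 * |x| ^ 3 := by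
  have h := abs_taylor_comp_log_add_mul_exp_le (expPartialSumBelow_nonneg (t * c) κ z)
    (expPartialSumFrom_pos (t * c) κ z) ht hg₀ hg₁ hg₂ hB₁ hB₂ hB₃ (c * x)
  rw [smoothMax_mul_sum_Iic_update, smoothMax_mul_sum_Iic_update, mul_zero, mul_zero,
    Real.exp_zero, mul_one]
  refine (le_of_eq ?_).trans (h.trans_eq ?_)
  · congr 1; ring
  · rw [abs_mul, abs_of_nonneg hc]; ring

end PartialSumTaylor

section Lindeberg

variable {Ω : Type*} [MeasurableSpace Ω] {μ : Measure Ω}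

lemma MeasureTheory.MemLp.integrable_abs_pow_three {u : Ω → ℝ} (hu : MemLp u 3 μ) :
    Integrable (fun ω => |u ω| ^ 3) μ := by
  simpa using hu.integrable_norm_pow (p := 3) (by norm_num)

lemma integral_abs_pow_three_pos {u : Ω → ℝ} (hu : MemLp u 3 μ)
    (hsq : ∫ ω, u ω ^ 2 ∂μ ≠ 0) : 0 < ∫ ω, |u ω| ^ 3 ∂μ := by
  refine (integral_nonneg fun ω => by positivity).lt_of_ne fun h => hsq ?_
  have hae := (integral_eq_zero_iff_of_nonneg (fun ω => by positivity)
    hu.integrable_abs_pow_three).1 h.symm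
  refine integral_eq_zero_of_ae ?_
  filter_upwards [hae] with ω hω
  have : u ω = 0 := by simpa using hω
  simp [this]

lemma sum_integral_abs_pow_three_eq {n : ℕ} {X : Fin n → Ω → ℝ} {i₀ : Fin n}
    (hid : ∀ i, IdentDistrib (X i) (X i₀) μ μ) :
    ∑ j, ∫ ω, |X j ω| ^ 3 ∂μ = n * ∫ ω, |X i₀ ω| ^ 3 ∂μ := by
  calc _ = ∑ _j : Fin n, ∫ ω, |X i₀ ω| ^ 3 ∂μ :=
        sum_congr rfl fun j _ => ((hid j).comp (measurable_abs.pow_const 3)).integral_eq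
    _ = _ := by simp

lemma ProbabilityTheory.iIndepFun.indepFun_comp_restrict {ι : Type*} {V : ι → Ω → ℝ}
    (h : iIndepFun V μ) (hV : ∀ i, Measurable (V i)) {T : Finset ι} {s : ι} (hs : s ∉ T)
    {E : Type*} [MeasurableSpace E] {φ : (T → ℝ) → E} (hφ : Measurable φ) :
    IndepFun (fun ω => φ fun i : T => V i ω) (V s) μ :=
  (h.indepFun_finset T {s} (disjoint_singleton_right.2 hs) hV).comp hφ
    (measurable_pi_apply (⟨s, mem_singleton_self s⟩ : ({s} : Finset ι)))

variable [IsFiniteMeasure μ] {E : Type*} [MeasurableSpace E] {W : Ω → E} {F : E → ℝ → ℝ}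
  {a b : E → ℝ} {Ca Cb M : ℝ}

lemma integral_sub_taylor_of_indepFun (hF : Measurable (uncurry F)) (ha : Measurable a)
    (hb : Measurable b) (haC : ∀ w, |a w| ≤ Ca) (hbC : ∀ w, |b w| ≤ Cb)
    (hTaylor : ∀ w x, |F w x - F w 0 - a w * x - b w * x ^ 2 / 2| ≤ M * |x| ^ 3)
    (hW : AEMeasurable W μ) {u : Ω → ℝ} (hu : MemLp u 3 μ) (hWu : IndepFun W u μ) :
    Integrable (fun ω => F (W ω) (u ω) - F (W ω) 0) μ ∧
      |∫ ω, (F (W ω) (u ω) - F (W ω) 0) ∂μ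
          - ((∫ ω, a (W ω) ∂μ) * (∫ ω, u ω ∂μ) + (∫ ω, b (W ω) ∂μ) * (∫ ω, u ω ^ 2 ∂μ) / 2)|
        ≤ M * ∫ ω, |u ω| ^ 3 ∂μ := by
  have hum : AEMeasurable u μ := hu.aestronglyMeasurable.aemeasurable
  have haW : AEMeasurable (fun ω => a (W ω)) μ := ha.comp_aemeasurable hW
  have hbW : AEMeasurable (fun ω => b (W ω)) μ := hb.comp_aemeasurable hW
  have hFu : AEMeasurable (fun ω => F (W ω) (u ω)) μ := hF.comp_aemeasurable (hW.prodMk hum)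
  have hF0 : AEMeasurable (fun ω => F (W ω) 0) μ :=
    hF.comp_aemeasurable (hW.prodMk aemeasurable_const)
  set R := fun ω => F (W ω) (u ω) - F (W ω) 0 - a (W ω) * u ω - b (W ω) * u ω ^ 2 / 2
  have hR : Integrable R μ :=
    (hu.integrable_abs_pow_three.const_mul M).mono' (by fun_prop) (ae_of_all _ fun ω => hTaylor _ _)
  have haint : Integrable (fun ω => a (W ω) * u ω) μ :=
    (hu.integrable (by norm_num)).bdd_mul haW.aestronglyMeasurable (ae_of_all _ fun ω => haC _)
  have hbint : Integrable (fun ω => b (W ω) * u ω ^ 2) μ :=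
    (hu.mono_exponent (by norm_num)).integrable_sq.bdd_mul hbW.aestronglyMeasurable
      (ae_of_all _ fun ω => hbC _)
  have ha_indep : ∫ ω, a (W ω) * u ω ∂μ = (∫ ω, a (W ω) ∂μ) * ∫ ω, u ω ∂μ :=
    (hWu.comp ha measurable_id).integral_mul_eq_mul_integral haW.aestronglyMeasurable
      hum.aestronglyMeasurable
  have hb_indep : ∫ ω, b (W ω) * u ω ^ 2 ∂μ = (∫ ω, b (W ω) ∂μ) * ∫ ω, u ω ^ 2 ∂μ :=
    (hWu.comp hb (measurable_id.pow_const 2)).integral_mul_eq_mul_integral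
      hbW.aestronglyMeasurable (hum.pow_const 2).aestronglyMeasurable
  have hdecomp : (fun ω => F (W ω) (u ω) - F (W ω) 0)
      = fun ω => R ω + a (W ω) * u ω + b (W ω) * u ω ^ 2 / 2 := by
    funext ω; simp only [R]; ring
  refine ⟨hdecomp ▸ (hR.add haint).add (hbint.div_const 2), ?_⟩
  rw [hdecomp, integral_add (f := fun ω => R ω + a (W ω) * u ω) (hR.add haint)
    (hbint.div_const 2), integral_add hR haint, integral_div, ha_indep, hb_indep]
  calc _ = |∫ ω, R ω ∂μ| := by ring_nf
    _ ≤ ∫ ω, |R ω| ∂μ := abs_integral_le_integral_abs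
    _ ≤ ∫ ω, M * |u ω| ^ 3 ∂μ := integral_mono hR.abs
        (hu.integrable_abs_pow_three.const_mul M) fun ω => hTaylor _ _
    _ = M * ∫ ω, |u ω| ^ 3 ∂μ := integral_const_mul _ _

lemma abs_integral_sub_le_of_taylor (hF : Measurable (uncurry F)) (ha : Measurable a)
    (hb : Measurable b) (haC : ∀ w, |a w| ≤ Ca) (hbC : ∀ w, |b w| ≤ Cb)
    (hTaylor : ∀ w x, |F w x - F w 0 - a w * x - b w * x ^ 2 / 2| ≤ M * |x| ^ 3)
    (hW : AEMeasurable W μ) {ξ η : Ω → ℝ} (hξ : MemLp ξ 3 μ) (hη : MemLp η 3 μ)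
    (hWξ : IndepFun W ξ μ) (hWη : IndepFun W η μ) (hmean : ∫ ω, ξ ω ∂μ = ∫ ω, η ω ∂μ)
    (hsq : ∫ ω, ξ ω ^ 2 ∂μ = ∫ ω, η ω ^ 2 ∂μ) :
    Integrable (fun ω => F (W ω) (ξ ω) - F (W ω) (η ω)) μ ∧
      |∫ ω, (F (W ω) (ξ ω) - F (W ω) (η ω)) ∂μ|
        ≤ M * (∫ ω, |ξ ω| ^ 3 ∂μ + ∫ ω, |η ω| ^ 3 ∂μ) := by
  obtain ⟨hIξ, hBξ⟩ := integral_sub_taylor_of_indepFun hF ha hb haC hbC hTaylor hW hξ hWξ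
  obtain ⟨hIη, hBη⟩ := integral_sub_taylor_of_indepFun hF ha hb haC hbC hTaylor hW hη hWη
  have hdiff : (fun ω => F (W ω) (ξ ω) - F (W ω) (η ω))
      = fun ω => (F (W ω) (ξ ω) - F (W ω) 0) - (F (W ω) (η ω) - F (W ω) 0) := by
    funext ω; ring
  rw [hmean, hsq] at hBξ
  refine ⟨hdiff ▸ hIξ.sub hIη, ?_⟩
  rw [hdiff, integral_sub hIξ hIη, mul_add]
  exact (abs_sub_le _ _ _).trans (add_le_add hBξ (by rwa [abs_sub_comm]))

end Lindeberg

section Hybrid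

variable {Ω : Type*} {n : ℕ}

def hybrid (X Y : Fin n → Ω → ℝ) (k : ℕ) (ω : Ω) : Fin n → ℝ :=
  fun j => if (j : ℕ) < k then Y j ω else X j ω

variable {X Y : Fin n → Ω → ℝ}

lemma update_hybrid_self (κ : Fin n) (ω : Ω) :
    update (hybrid X Y κ ω) κ (X κ ω) = hybrid X Y κ ω :=
  update_eq_self_iff.2 (by simp [hybrid])

lemma update_hybrid_succ (κ : Fin n) (ω : Ω) :
    update (hybrid X Y κ ω) κ (Y κ ω) = hybrid X Y (κ + 1) ω := by
  funext j
  by_cases hj : j = κ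
  · simp [hybrid, hj]
  · have : (j : ℕ) ≠ κ := Fin.val_ne_of_ne hj
    by_cases hjκ : (j : ℕ) < κ <;> simp [hybrid, hj, hjκ] <;> omega

variable [MeasurableSpace Ω] {μ : Measure Ω}

lemma indepFun_update_hybrid (hXm : ∀ j, Measurable (X j)) (hYm : ∀ j, Measurable (Y j))
    (hindep : iIndepFun (Sum.elim X Y) μ) (κ : Fin n) :
    Measurable (fun ω => update (hybrid X Y κ ω) κ 0) ∧
      IndepFun (fun ω => update (hybrid X Y κ ω) κ 0) (X κ) μ ∧
      IndepFun (fun ω => update (hybrid X Y κ ω) κ 0) (Y κ) μ := by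
  set T : Finset (Fin n ⊕ Fin n) := {Sum.inl κ, Sum.inr κ}ᶜ
  have hT : ∀ {j : Fin n}, j ≠ κ → Sum.inl j ∈ T ∧ Sum.inr j ∈ T := fun hj => by simp [T, hj]
  -- the increments other than `X κ` and `Y κ` determine the hybrid with its `κ`-th entry erased
  let φ : (T → ℝ) → Fin n → ℝ := fun v j =>
    if hj : j = κ then 0 else if j < κ then v ⟨_, (hT hj).2⟩ else v ⟨_, (hT hj).1⟩
  have hφ : Measurable φ := measurable_pi_lambda _ fun j => by
    by_cases hj : j = κ
    · simp [φ, hj]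
    · by_cases hjκ : j < κ <;> simp [φ, hj, hjκ, measurable_pi_apply]
  have hWφ : (fun ω => update (hybrid X Y κ ω) κ 0) = fun ω => φ fun i : T => Sum.elim X Y i ω := by
    funext ω j
    by_cases hj : j = κ
    · simp [φ, hj]
    · by_cases hjκ : j < κ <;> simp [φ, hybrid, hj, hjκ]
  have hV : ∀ i, Measurable (Sum.elim X Y i) := by
    rintro (j | j)
    exacts [hXm j, hYm j]
  rw [hWφ]
  exact ⟨hφ.comp (measurable_pi_lambda _ fun i => hV i),
    hindep.indepFun_comp_restrict hV (s := .inl κ) (by simp [T]) hφ,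
    hindep.indepFun_comp_restrict hV (s := .inr κ) (by simp [T]) hφ⟩

variable [IsFiniteMeasure μ] {G : (Fin n → ℝ) → ℝ} {a b : Fin n → (Fin n → ℝ) → ℝ}
  {Ca Cb M : ℝ}

lemma abs_integral_hybrid_sub_le (hG : Measurable G) (ha : ∀ κ, Measurable (a κ))
    (hb : ∀ κ, Measurable (b κ)) (haC : ∀ κ z, |a κ z| ≤ Ca) (hbC : ∀ κ z, |b κ z| ≤ Cb)
    (hTaylor : ∀ κ z x,
      |G (update z κ x) - G (update z κ 0) - a κ z * x - b κ z * x ^ 2 / 2| ≤ M * |x| ^ 3)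
    (hXm : ∀ j, Measurable (X j)) (hYm : ∀ j, Measurable (Y j))
    (hX : ∀ j, MemLp (X j) 3 μ) (hY : ∀ j, MemLp (Y j) 3 μ)
    (hindep : iIndepFun (Sum.elim X Y) μ)
    (hmean : ∀ j, ∫ ω, X j ω ∂μ = ∫ ω, Y j ω ∂μ)
    (hsq : ∀ j, ∫ ω, X j ω ^ 2 ∂μ = ∫ ω, Y j ω ^ 2 ∂μ) (κ : Fin n) :
    Integrable (fun ω => G (hybrid X Y κ ω) - G (hybrid X Y (κ + 1) ω)) μ ∧
      |∫ ω, (G (hybrid X Y κ ω) - G (hybrid X Y (κ + 1) ω)) ∂μ|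
        ≤ M * (∫ ω, |X κ ω| ^ 3 ∂μ + ∫ ω, |Y κ ω| ^ 3 ∂μ) := by
  obtain ⟨hWm, hWX, hWY⟩ := indepFun_update_hybrid hXm hYm hindep κ
  simpa only [update_idem, update_hybrid_self, update_hybrid_succ] using
    abs_integral_sub_le_of_taylor (F := fun w x => G (update w κ x))
      (hG.comp measurable_update') (ha κ) (hb κ) (haC κ) (hbC κ) (hTaylor κ) hWm.aemeasurable
      (hX κ) (hY κ) hWX hWY (hmean κ) (hsq κ)

theorem abs_integral_sub_le_of_lindeberg (hG : Measurable G) (ha : ∀ κ, Measurable (a κ))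
    (hb : ∀ κ, Measurable (b κ)) (haC : ∀ κ z, |a κ z| ≤ Ca) (hbC : ∀ κ z, |b κ z| ≤ Cb)
    (hTaylor : ∀ κ z x,
      |G (update z κ x) - G (update z κ 0) - a κ z * x - b κ z * x ^ 2 / 2| ≤ M * |x| ^ 3)
    (hXm : ∀ j, Measurable (X j)) (hYm : ∀ j, Measurable (Y j))
    (hX : ∀ j, MemLp (X j) 3 μ) (hY : ∀ j, MemLp (Y j) 3 μ)
    (hindep : iIndepFun (Sum.elim X Y) μ)
    (hmean : ∀ j, ∫ ω, X j ω ∂μ = ∫ ω, Y j ω ∂μ)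
    (hsq : ∀ j, ∫ ω, X j ω ^ 2 ∂μ = ∫ ω, Y j ω ^ 2 ∂μ)
    (hGX : Integrable (fun ω => G fun j => X j ω) μ) :
    |∫ ω, G (fun j => X j ω) ∂μ - ∫ ω, G (fun j => Y j ω) ∂μ|
      ≤ M * ∑ j, (∫ ω, |X j ω| ^ 3 ∂μ + ∫ ω, |Y j ω| ^ 3 ∂μ) := by
  have hstep := abs_integral_hybrid_sub_le hG ha hb haC hbC hTaylor hXm hYm hX hY hindep
    hmean hsq
  have h₀ : ∀ ω, hybrid X Y 0 ω = fun j => X j ω := fun ω => by funext j; simp [hybrid]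
  have hₙ : ∀ ω, hybrid X Y n ω = fun j => Y j ω := fun ω => by funext j; simp [hybrid]
  have hint : ∀ k ≤ n, Integrable (fun ω => G (hybrid X Y k ω)) μ := by
    intro k hk
    induction k with
    | zero => simpa [h₀] using hGX
    | succ k ih =>
      exact ((ih (by omega)).sub (hstep ⟨k, hk⟩).1).congr
        (ae_of_all _ fun ω => sub_sub_cancel _ _)
  set Φ : ℕ → ℝ := fun k => ∫ ω, G (hybrid X Y k ω) ∂μ
  have htel : ∫ ω, G (fun j => X j ω) ∂μ - ∫ ω, G (fun j => Y j ω) ∂μ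
      = ∑ κ : Fin n, (Φ κ - Φ (κ + 1)) := by
    rw [Fin.sum_univ_eq_sum_range (fun k => Φ k - Φ (k + 1)), sum_range_sub']
    simp [Φ, h₀, hₙ]
  rw [htel, mul_sum]
  refine (abs_sum_le_sum_abs _ _).trans (sum_le_sum fun κ _ => ?_)
  rw [← integral_sub (hint κ κ.isLt.le) (hint (κ + 1) κ.isLt)]
  exact (hstep κ).2

end Hybrid

section MaxPartialSum

variable {Ω : Type*} [MeasurableSpace Ω] {μ : Measure Ω} [IsProbabilityMeasure μ]
  {g : ℝ → ℝ} {B₁ B₂ B₃ t c : ℝ}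

lemma integrable_comp_smoothMax {ι : Type*} [Fintype ι] [Nonempty ι] {V : ι → Ω → ℝ}
    (hV : ∀ i, Integrable (V i) μ) (hVm : ∀ i, Measurable (V i)) (hg : Differentiable ℝ g)
    (hB₁ : ∀ y, |deriv g y| ≤ B₁) (ht : 0 < t) :
    Integrable (fun ω => g (smoothMax t fun i => V i ω)) μ := by
  have hB₁0 : 0 ≤ B₁ := (abs_nonneg _).trans (hB₁ 0)
  have hm : Measurable fun ω => g (smoothMax t fun i => V i ω) := by
    have := hg.continuous.measurable
    unfold smoothMax
    fun_prop
  refine ((integrable_const (|g 0| + B₁ * (Real.log (Fintype.card ι) / t))).add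
    ((integrable_finsetSum univ fun i _ => (hV i).abs).const_mul B₁)).mono'
    hm.aestronglyMeasurable (ae_of_all _ fun ω => ?_)
  have hlip := abs_sub_le_of_abs_deriv_le hg hB₁ (smoothMax t fun i => V i ω) 0
  have hsm := mul_le_mul_of_nonneg_left (abs_smoothMax_le ht fun i => V i ω) hB₁0
  simp only [sub_zero, Real.norm_eq_abs, Pi.add_apply] at hlip ⊢
  have := abs_sub_abs_le_abs_sub (g (smoothMax t fun i => V i ω)) (g 0)
  nlinarith

lemma abs_integral_comp_iSup_sub_le {ι : Type*} [Fintype ι] [Countable ι] [Nonempty ι]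
    {V : ι → Ω → ℝ} (hV : ∀ i, Integrable (V i) μ) (hVm : ∀ i, Measurable (V i))
    (hg : Differentiable ℝ g) (hB₁ : ∀ y, |deriv g y| ≤ B₁) (ht : 0 < t) :
    |∫ ω, g (⨆ i, V i ω) ∂μ - ∫ ω, g (smoothMax t fun i => V i ω) ∂μ|
      ≤ B₁ * (Real.log (Fintype.card ι) / t) := by
  have hsmooth := integrable_comp_smoothMax hV hVm hg hB₁ ht
  have hdiff : Integrable (fun ω => g (⨆ i, V i ω) - g (smoothMax t fun i => V i ω)) μ :=
    (integrable_const (B₁ * (Real.log (Fintype.card ι) / t))).mono'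
      ((hg.continuous.measurable.comp (Measurable.iSup hVm)).aestronglyMeasurable.sub
        hsmooth.aestronglyMeasurable)
      (ae_of_all _ fun ω => abs_comp_iSup_sub_comp_smoothMax_le hg hB₁ ht _)
  rw [← integral_sub ((hdiff.add hsmooth).congr (ae_of_all _ fun ω => sub_add_cancel _ _))
    hsmooth]
  refine abs_integral_le_integral_abs.trans ?_
  calc _ ≤ ∫ _ω, B₁ * (Real.log (Fintype.card ι) / t) ∂μ :=
        integral_mono hdiff.abs (integrable_const _)
          fun ω => abs_comp_iSup_sub_comp_smoothMax_le hg hB₁ ht _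
    _ = _ := by simp


lemma integrable_and_measurable_mul_sum_Iic {n : ℕ} {V : Fin n → Ω → ℝ}
    (hVm : ∀ j, Measurable (V j)) (hV : ∀ j, MemLp (V j) 3 μ) (i : Fin n) :
    Integrable (fun ω => c * ∑ j ∈ Iic i, V j ω) μ ∧
      Measurable (fun ω => c * ∑ j ∈ Iic i, V j ω) :=
  ⟨(integrable_finsetSum _ fun j _ => (hV j).integrable (by norm_num)).const_mul c,
    (Finset.measurable_sum _ fun j _ => hVm j).const_mul c⟩

lemma abs_integral_comp_smoothMax_partialSum_sub_le {n : ℕ} (hn : 0 < n)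
    {X Y : Fin n → Ω → ℝ} (hXm : ∀ j, Measurable (X j)) (hYm : ∀ j, Measurable (Y j))
    (hX : ∀ j, MemLp (X j) 3 μ) (hY : ∀ j, MemLp (Y j) 3 μ)
    (hindep : iIndepFun (Sum.elim X Y) μ)
    (hmean : ∀ j, ∫ ω, X j ω ∂μ = ∫ ω, Y j ω ∂μ)
    (hsq : ∀ j, ∫ ω, X j ω ^ 2 ∂μ = ∫ ω, Y j ω ^ 2 ∂μ)
    (hg₀ : Differentiable ℝ g) (hg₁ : Differentiable ℝ (deriv g))
    (hg₂ : Differentiable ℝ (deriv (deriv g)))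
    (hB₁ : ∀ y, |deriv g y| ≤ B₁) (hB₂ : ∀ y, |deriv (deriv g) y| ≤ B₂)
    (hB₃ : ∀ y, |deriv (deriv (deriv g)) y| ≤ B₃) (ht : 0 < t) (hc : 0 ≤ c) :
    |∫ ω, g (smoothMax t fun i => c * ∑ j ∈ Iic i, X j ω) ∂μ
        - ∫ ω, g (smoothMax t fun i => c * ∑ j ∈ Iic i, Y j ω) ∂μ|
      ≤ (B₃ + 3 * t * B₂ + t ^ 2 * B₁) * c ^ 3
          * ∑ j, (∫ ω, |X j ω| ^ 3 ∂μ + ∫ ω, |Y j ω| ^ 3 ∂μ) := by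
  have : Nonempty (Fin n) := ⟨⟨0, hn⟩⟩
  have hg₀m := hg₀.continuous.measurable
  refine abs_integral_sub_le_of_lindeberg (Ca := c * B₁) (Cb := c ^ 2 * (B₂ + t * B₁))
    (G := fun z => g (smoothMax t fun i => c * ∑ j ∈ Iic i, z j))
    (a := fun κ z => c * softmaxTaylorCoeff₁ g t (expPartialSumBelow (t * c) κ z)
      (expPartialSumFrom (t * c) κ z))
    (b := fun κ z => c ^ 2 * softmaxTaylorCoeff₂ g t (expPartialSumBelow (t * c) κ z)
      (expPartialSumFrom (t * c) κ z))
    (by unfold smoothMax; fun_prop)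
    (fun κ => by unfold softmaxTaylorCoeff₁ expPartialSumBelow expPartialSumFrom; fun_prop)
    (fun κ => by unfold softmaxTaylorCoeff₂ expPartialSumBelow expPartialSumFrom; fun_prop)
    (fun κ z => ?_) (fun κ z => ?_)
    (abs_taylor_comp_smoothMax_update_le ht hc hg₀ hg₁ hg₂ hB₁ hB₂ hB₃)
    hXm hYm hX hY hindep hmean hsq (integrable_comp_smoothMax
      (fun i => (integrable_and_measurable_mul_sum_Iic hXm hX i).1)
      (fun i => (integrable_and_measurable_mul_sum_Iic hXm hX i).2) hg₀ hB₁ ht)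
  · rw [abs_mul, abs_of_nonneg hc]
    exact mul_le_mul_of_nonneg_left (abs_softmaxTaylorCoeff₁_le
      (expPartialSumBelow_nonneg _ κ z) (expPartialSumFrom_pos _ κ z) hB₁) hc
  · rw [abs_mul, abs_of_nonneg (by positivity)]
    exact mul_le_mul_of_nonneg_left (abs_softmaxTaylorCoeff₂_le
      (expPartialSumBelow_nonneg _ κ z) (expPartialSumFrom_pos _ κ z) ht.le hB₁ hB₂)
      (by positivity)

theorem abs_integral_comp_iSup_partialSum_sub_le {n : ℕ} (hn : 0 < n) {X Y : Fin n → Ω → ℝ}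
    (hXm : ∀ j, Measurable (X j)) (hYm : ∀ j, Measurable (Y j))
    (hX : ∀ j, MemLp (X j) 3 μ) (hY : ∀ j, MemLp (Y j) 3 μ)
    (hindep : iIndepFun (Sum.elim X Y) μ)
    (hmean : ∀ j, ∫ ω, X j ω ∂μ = ∫ ω, Y j ω ∂μ)
    (hsq : ∀ j, ∫ ω, X j ω ^ 2 ∂μ = ∫ ω, Y j ω ^ 2 ∂μ)
    (hg₀ : Differentiable ℝ g) (hg₁ : Differentiable ℝ (deriv g))
    (hg₂ : Differentiable ℝ (deriv (deriv g)))
    (hB₁ : ∀ y, |deriv g y| ≤ B₁) (hB₂ : ∀ y, |deriv (deriv g) y| ≤ B₂)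
    (hB₃ : ∀ y, |deriv (deriv (deriv g)) y| ≤ B₃) (ht : 0 < t) (hc : 0 ≤ c) :
    |∫ ω, g (⨆ i, c * ∑ j ∈ Iic i, X j ω) ∂μ - ∫ ω, g (⨆ i, c * ∑ j ∈ Iic i, Y j ω) ∂μ|
      ≤ 2 * (B₁ * (Real.log n / t)) + (B₃ + 3 * t * B₂ + t ^ 2 * B₁) * c ^ 3
          * ∑ j, (∫ ω, |X j ω| ^ 3 ∂μ + ∫ ω, |Y j ω| ^ 3 ∂μ) := by
  have : Nonempty (Fin n) := ⟨⟨0, hn⟩⟩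
  have hsmooth : ∀ V : Fin n → Ω → ℝ, (∀ j, Measurable (V j)) → (∀ j, MemLp (V j) 3 μ) →
      |∫ ω, g (⨆ i, c * ∑ j ∈ Iic i, V j ω) ∂μ
          - ∫ ω, g (smoothMax t fun i => c * ∑ j ∈ Iic i, V j ω) ∂μ|
        ≤ B₁ * (Real.log n / t) := fun V hVm hV => by
    simpa using abs_integral_comp_iSup_sub_le
      (fun i => (integrable_and_measurable_mul_sum_Iic hVm hV i).1)
      (fun i => (integrable_and_measurable_mul_sum_Iic hVm hV i).2) hg₀ hB₁ ht
  have hX' := hsmooth X hXm hX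
  have hY' := hsmooth Y hYm hY
  have hlind := abs_integral_comp_smoothMax_partialSum_sub_le hn hXm hYm hX hY hindep hmean
    hsq hg₀ hg₁ hg₂ hB₁ hB₂ hB₃ ht hc
  rw [abs_sub_comm] at hY'
  have := abs_sub_le (∫ ω, g (⨆ i, c * ∑ j ∈ Iic i, X j ω) ∂μ)
    (∫ ω, g (smoothMax t fun i => c * ∑ j ∈ Iic i, X j ω) ∂μ)
    (∫ ω, g (⨆ i, c * ∑ j ∈ Iic i, Y j ω) ∂μ)
  have := abs_sub_le (∫ ω, g (smoothMax t fun i => c * ∑ j ∈ Iic i, X j ω) ∂μ)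
    (∫ ω, g (smoothMax t fun i => c * ∑ j ∈ Iic i, Y j ω) ∂μ)
    (∫ ω, g (⨆ i, c * ∑ j ∈ Iic i, Y j ω) ∂μ)
  linarith

end MaxPartialSum

lemma lindeberg_tradeoff_monomial_le {a b l B₁ B₂ B₃ : ℝ} (ha : 0 < a) (hb : 0 < b)
    (hl : 0 < l) (hB₁ : 0 ≤ B₁) (hB₂ : 0 ≤ B₂) (hB₃ : 0 ≤ B₃) :
    2 * (B₁ * (l ^ 3 / (a⁻¹ * b * l)))
        + (B₃ + 3 * (a⁻¹ * b * l) * B₂ + (a⁻¹ * b * l) ^ 2 * B₁)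
          * (b ^ 3)⁻¹ ^ 3 * (b ^ 6 * (2 * a ^ 3))
      ≤ (19 / 3 * B₁ + 13 * B₂ + 13 / 3 * B₃) * (a * b⁻¹ * l ^ 2 + a ^ 3 * (b ^ 3)⁻¹) := by
  -- AM-GM: the middle term is the geometric mean of the two terms of the bound
  have hG : 2 * (a ^ 2 * l / b ^ 2) ≤ a * l ^ 2 / b + a ^ 3 / b ^ 3 := by
    have : a * l ^ 2 / b + a ^ 3 / b ^ 3 - 2 * (a ^ 2 * l / b ^ 2)
        = a / b * (l - a / b) ^ 2 := by
      field_simp; ring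
    nlinarith [mul_nonneg (div_pos ha hb).le (sq_nonneg (l - a / b))]
  have hT₁ : 0 ≤ a * l ^ 2 / b := by positivity
  have hT₂ : 0 ≤ a ^ 3 / b ^ 3 := by positivity
  have hLHS : 2 * (B₁ * (l ^ 3 / (a⁻¹ * b * l)))
        + (B₃ + 3 * (a⁻¹ * b * l) * B₂ + (a⁻¹ * b * l) ^ 2 * B₁)
          * (b ^ 3)⁻¹ ^ 3 * (b ^ 6 * (2 * a ^ 3))
      = 4 * B₁ * (a * l ^ 2 / b) + 6 * B₂ * (a ^ 2 * l / b ^ 2) + 2 * B₃ * (a ^ 3 / b ^ 3) := by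
    field_simp; ring
  have hRHS : a * b⁻¹ * l ^ 2 + a ^ 3 * (b ^ 3)⁻¹ = a * l ^ 2 / b + a ^ 3 / b ^ 3 := by ring
  rw [hLHS, hRHS]
  nlinarith [mul_le_mul_of_nonneg_left hG hB₂, mul_nonneg hB₁ hT₁, mul_nonneg hB₁ hT₂,
    mul_nonneg hB₂ hT₁, mul_nonneg hB₂ hT₂, mul_nonneg hB₃ hT₁, mul_nonneg hB₃ hT₂]

lemma lindeberg_tradeoff_le {γ N L B₁ B₂ B₃ t : ℝ} (hγ : 0 < γ) (hN : 0 < N) (hL : 0 < L)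
    (hB₁ : 0 ≤ B₁) (hB₂ : 0 ≤ B₂) (hB₃ : 0 ≤ B₃)
    (ht : t = γ ^ (-(1 : ℝ) / 3) * N ^ ((1 : ℝ) / 6) * L ^ ((1 : ℝ) / 3)) :
    2 * (B₁ * (L / t)) + (B₃ + 3 * t * B₂ + t ^ 2 * B₁) * (Real.sqrt N)⁻¹ ^ 3 * (N * (2 * γ))
      ≤ (19 / 3 * B₁ + 13 * B₂ + 13 / 3 * B₃) *
        (γ ^ ((1 : ℝ) / 3) * N ^ (-(1 : ℝ) / 6) * L ^ ((2 : ℝ) / 3) + γ * N ^ (-(1 : ℝ) / 2)) := by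
  have hpow : ∀ {x : ℝ}, 0 < x → ∀ (r : ℝ) (k : ℕ), x ^ (r * k) = (x ^ r) ^ k :=
    fun hx r k => Real.rpow_mul_natCast hx.le r k
  have hneg : ∀ {x : ℝ}, 0 < x → ∀ (r : ℝ), x ^ (-r) = (x ^ r)⁻¹ :=
    fun hx r => Real.rpow_neg hx.le r
  subst ht
  set a := γ ^ ((1 : ℝ) / 3)
  set b := N ^ ((1 : ℝ) / 6)
  set l := L ^ ((1 : ℝ) / 3)
  have ha : 0 < a := by positivity
  have hb : 0 < b := by positivity
  have hl : 0 < l := by positivity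
  have hγa : γ = a ^ 3 := by rw [← hpow hγ]; norm_num
  have hLl : L = l ^ 3 := by rw [← hpow hL]; norm_num
  have hNb : N = b ^ 6 := by rw [← hpow hN]; norm_num
  have e₁ : γ ^ (-(1 : ℝ) / 3) = a⁻¹ := by rw [← hneg hγ]; norm_num
  have e₂ : N ^ (-(1 : ℝ) / 6) = b⁻¹ := by rw [← hneg hN]; norm_num
  have e₃ : N ^ (-(1 : ℝ) / 2) = (b ^ 3)⁻¹ := by rw [← hpow hN, ← hneg hN]; norm_num
  have e₄ : L ^ ((2 : ℝ) / 3) = l ^ 2 := by rw [← hpow hL]; norm_num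
  have e₅ : Real.sqrt N = b ^ 3 := by rw [Real.sqrt_eq_rpow, ← hpow hN]; norm_num
  rw [e₁, e₂, e₃, e₄, e₅]
  clear_value a b l
  subst hγa hLl hNb
  exact lindeberg_tradeoff_monomial_le ha hb hl hB₁ hB₂ hB₃

theorem stmt7
    {Ω : Type} [MeasurableSpace Ω] {μ : Measure Ω} [IsProbabilityMeasure μ]
    {n : ℕ} (hn : 2 ≤ n)
    (X Y : Fin n → Ω → ℝ)
    (hXmeas : ∀ i, Measurable (X i)) (hYmeas : ∀ i, Measurable (Y i))
    (hXid : ∀ i, IdentDistrib (X i) (X ⟨0, by omega⟩) μ μ)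
    (hYid : ∀ i, IdentDistrib (Y i) (Y ⟨0, by omega⟩) μ μ)
    (hindep : iIndepFun (Sum.elim X Y) μ)
    (hX3 : MemLp (X ⟨0, by omega⟩) 3 μ) (hY3 : MemLp (Y ⟨0, by omega⟩) 3 μ)
    (hXmean : ∫ ω, X ⟨0, by omega⟩ ω ∂μ = 0)
    (hYmean : ∫ ω, Y ⟨0, by omega⟩ ω ∂μ = 0)
    (hXvar : ∫ ω, (X ⟨0, by omega⟩ ω) ^ 2 ∂μ = 1)
    (hYvar : ∫ ω, (Y ⟨0, by omega⟩ ω) ^ 2 ∂μ = 1)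
    (γ : ℝ)
    (hγ : γ = max (∫ ω, |X ⟨0, by omega⟩ ω| ^ 3 ∂μ)
      (∫ ω, |Y ⟨0, by omega⟩ ω| ^ 3 ∂μ))
    (g : ℝ → ℝ) (hg : ∀ p < 3, Differentiable ℝ (iteratedDeriv p g))
    (B1 B2 B3 : ℝ)
    (hB1 : ∀ t, |deriv g t| ≤ B1)
    (hB2 : ∀ t, |iteratedDeriv 2 g t| ≤ B2)
    (hB3 : ∀ t, |iteratedDeriv 3 g t| ≤ B3) :
    |(∫ ω, g (⨆ i : Fin n, (Real.sqrt n)⁻¹ * ∑ j ∈ Finset.Iic i, X j ω) ∂μ) -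
        ∫ ω, g (⨆ i : Fin n, (Real.sqrt n)⁻¹ * ∑ j ∈ Finset.Iic i, Y j ω) ∂μ| ≤
      (19 / 3 * B1 + 13 * B2 + 13 / 3 * B3) *
        (γ ^ ((1 : ℝ) / 3) * (n : ℝ) ^ (-(1 : ℝ) / 6) *
            Real.log n ^ ((2 : ℝ) / 3) +
          γ * (n : ℝ) ^ (-(1 : ℝ) / 2)) := by
  have hB₂ : ∀ y, |deriv (deriv g) y| ≤ B2 := by simpa [iteratedDeriv_succ] using hB2
  have hB₃ : ∀ y, |deriv (deriv (deriv g)) y| ≤ B3 := by simpa [iteratedDeriv_succ] using hB3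
  have hXsq : ∀ j, ∫ ω, X j ω ^ 2 ∂μ = ∫ ω, X ⟨0, by omega⟩ ω ^ 2 ∂μ :=
    fun j => ((hXid j).comp (measurable_id.pow_const 2)).integral_eq
  have hYsq : ∀ j, ∫ ω, Y j ω ^ 2 ∂μ = ∫ ω, Y ⟨0, by omega⟩ ω ^ 2 ∂μ :=
    fun j => ((hYid j).comp (measurable_id.pow_const 2)).integral_eq
  have hXγ : ∫ ω, |X ⟨0, by omega⟩ ω| ^ 3 ∂μ ≤ γ := hγ ▸ le_max_left _ _
  have hYγ : ∫ ω, |Y ⟨0, by omega⟩ ω| ^ 3 ∂μ ≤ γ := hγ ▸ le_max_right _ _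
  have hcube : ∑ j, (∫ ω, |X j ω| ^ 3 ∂μ + ∫ ω, |Y j ω| ^ 3 ∂μ) ≤ n * (2 * γ) := by
    rw [sum_add_distrib, sum_integral_abs_pow_three_eq hXid, sum_integral_abs_pow_three_eq hYid,
      ← mul_add, two_mul]
    gcongr
  have hγ₀ : 0 < γ := (integral_abs_pow_three_pos hX3 (by simp [hXvar])).trans_le hXγ
  have hL : 0 < Real.log n := Real.log_pos (by exact_mod_cast hn)
  have hB₁₀ : 0 ≤ B1 := (abs_nonneg _).trans (hB1 0)
  have hB₂₀ : 0 ≤ B2 := (abs_nonneg _).trans (hB₂ 0)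
  have hB₃₀ : 0 ≤ B3 := (abs_nonneg _).trans (hB₃ 0)
  refine (abs_integral_comp_iSup_partialSum_sub_le (by omega) hXmeas hYmeas
    (fun j => (hXid j).symm.memLp_snd hX3) (fun j => (hYid j).symm.memLp_snd hY3) hindep
    (fun j => by rw [(hXid j).integral_eq, (hYid j).integral_eq, hXmean, hYmean])
    (fun j => by rw [hXsq, hYsq, hXvar, hYvar])
    (by simpa using hg 0 (by norm_num)) (by simpa using hg 1 (by norm_num))
    (by simpa [iteratedDeriv_succ] using hg 2 (by norm_num)) hB1 hB₂ hB₃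
    (t := γ ^ (-(1 : ℝ) / 3) * (n : ℝ) ^ ((1 : ℝ) / 6) * Real.log n ^ ((1 : ℝ) / 3))
    (mul_pos (mul_pos (Real.rpow_pos_of_pos hγ₀ _) (by positivity)) (Real.rpow_pos_of_pos hL _))
    (by positivity)).trans ?_
  refine le_trans ?_ (lindeberg_tradeoff_le hγ₀ (by positivity) hL hB₁₀ hB₂₀ hB₃₀ rfl)
  gcongr
end

section
/- Fix z = u + iv ∈ ℂ with v ≠ 0 and N ≥ 1, and let f : ℝⁿ → ℂ (n = N(N+1)/2) be the Stieltjes transform map f(x) := N⁻¹ tr((A(x) − zI)⁻¹), where A(x) is the N×N real symmetric matrix with (i,j) entry N^{-1/2} x_{ij} for i ≤ j. Then for all x and all 1 ≤ i ≤ j ≤ N: |∂f/∂x_{ij}(x)| ≤ 2 |v|⁻² N^{-3/2}, |∂²f/∂x_{ij}²(x)| ≤ 4 |v|⁻³ N⁻², and |∂³f/∂x_{ij}³(x)| ≤ 12 |v|⁻⁴ N^{-5/2}. -/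
open MeasureTheory ProbabilityTheory

/-- The Wigner matrix map: `A(x)` has `(a,b)` entry `N^{-1/2} x_{ab}` for `a ≤ b`
and `N^{-1/2} x_{ba}` for `a > b` (viewed as a complex matrix). -/
noncomputable def wignerMatrix (N : ℕ) (x : Fin N × Fin N → ℝ) :
    Matrix (Fin N) (Fin N) ℂ :=
  fun a b => ((Real.sqrt N)⁻¹ * (if a ≤ b then x (a, b) else x (b, a)) : ℝ)

/-- The resolventW `G(x) = (A(x) - zI)⁻¹`. -/
noncomputable def resolventW (N : ℕ) (z : ℂ) (x : Fin N × Fin N → ℝ) :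
    Matrix (Fin N) (Fin N) ℂ :=
  (wignerMatrix N x - z • (1 : Matrix (Fin N) (Fin N) ℂ))⁻¹

/-- The Stieltjes transform `f(x) = N⁻¹ tr((A(x) - zI)⁻¹)`. -/
noncomputable def stieltjes (N : ℕ) (z : ℂ) (x : Fin N × Fin N → ℝ) : ℂ :=
  (N : ℂ)⁻¹ * Matrix.trace (resolventW N z x)

/-- `∂A/∂x_{ij}`: the matrix with `N^{-1/2}` in positions `(i,j)` and `(j,i)`,
and `0` elsewhere. -/
noncomputable def dA (N : ℕ) (i j : Fin N) : Matrix (Fin N) (Fin N) ℂ :=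
  fun a b => if (a, b) = (i, j) ∨ (a, b) = (j, i) then ((Real.sqrt N)⁻¹ : ℝ) else 0

/-- The `p`-fold partial derivative in the coordinate `q` of a complex-valued
function of the variables `(x_{ij})`. -/
noncomputable def pderivC (N : ℕ) (f : (Fin N × Fin N → ℝ) → ℂ)
    (q : Fin N × Fin N) (p : ℕ) (x : Fin N × Fin N → ℝ) : ℂ :=
  iteratedDeriv p (fun t => f (Function.update x q t)) (x q)

/-!
Along the line `t ↦ x + t e_{ij}` the resolvent `G` satisfies `G' = -G D G` with `D = ∂A/∂x_{ij}`,
so the `k`-th derivative of `tr G` is `(-1)^k k! tr((G D)^k G)`. By cyclicity this trace is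
`tr(D Y)` with `Y = (G D)^(k-1) G²`, which involves only two entries of `Y`, each at most
`‖Y‖ ≤ ‖G‖^(k+1) ‖D‖^(k-1)` in operator norm. Finally `‖D‖ ≤ N^{-1/2}`, and `‖G‖ ≤ |Im z|⁻¹`
because the spectrum of the self-adjoint matrix `A` is real.
-/

namespace IsSelfAdjoint

variable {A : Type*} [CStarAlgebra A] {a : A} {z : ℂ}

theorem sub_ne_zero_of_mem_spectrum (ha : IsSelfAdjoint a) (hz : z.im ≠ 0) {x : ℂ}
    (hx : x ∈ spectrum ℂ a) : x - z ≠ 0 := by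
  rw [ha.mem_spectrum_eq_re hx, sub_ne_zero]
  rintro rfl
  exact hz (Complex.ofReal_im _)

theorem cfc_sub_algebraMap (ha : IsSelfAdjoint a) (z : ℂ) :
    cfc (fun x : ℂ => x - z) a = a - algebraMap ℂ A z := by
  rw [cfc_sub .., cfc_id' ℂ a, cfc_const z a]

theorem isUnit_sub_algebraMap (ha : IsSelfAdjoint a) (hz : z.im ≠ 0) :
    IsUnit (a - algebraMap ℂ A z) := by
  rw [← ha.cfc_sub_algebraMap]
  exact (isUnit_cfc_iff _ a).2 fun x hx => ha.sub_ne_zero_of_mem_spectrum hz hx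

theorem norm_ringInverse_sub_algebraMap_le (ha : IsSelfAdjoint a) (hz : z.im ≠ 0) :
    ‖Ring.inverse (a - algebraMap ℂ A z)‖ ≤ |z.im|⁻¹ := by
  rw [← ha.cfc_sub_algebraMap, ← cfc_inv _ _ fun x hx => ha.sub_ne_zero_of_mem_spectrum hz hx]
  refine norm_cfc_le (by positivity) fun x hx => ?_
  have hre : x = (x.re : ℂ) := ha.mem_spectrum_eq_re hx
  rw [norm_inv]
  refine inv_anti₀ (abs_pos.2 hz) ?_
  calc |z.im| = |(x - z).im| := by rw [hre]; simp
    _ ≤ ‖x - z‖ := Complex.abs_im_le_norm _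

end IsSelfAdjoint

section ResolventCalculus

variable {𝕜 R : Type*} [NontriviallyNormedField 𝕜] [NormedRing R] [NormedAlgebra 𝕜 R]

theorem HasDerivAt.ringInverse [HasSummableGeomSeries R] {Φ : 𝕜 → R} {D : R} {t : 𝕜}
    (hΦ : HasDerivAt Φ D t) (hu : IsUnit (Φ t)) :
    HasDerivAt (fun s => Ring.inverse (Φ s))
      (-(Ring.inverse (Φ t) * D * Ring.inverse (Φ t))) t := by
  obtain ⟨u, hu⟩ := hu
  have h := hasFDerivAt_ringInverse (𝕜 := 𝕜) u
  rw [hu] at h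
  refine (h.comp_hasDerivAt t hΦ).congr_deriv ?_
  simp [← hu, mul_assoc]

theorem norm_mul_pow_mul_le (a b : R) (k : ℕ) : ‖(a * b) ^ k * a‖ ≤ (‖a‖ * ‖b‖) ^ k * ‖a‖ := by
  induction k with
  | zero => simp
  | succ k ih =>
    rw [pow_succ', mul_assoc, mul_assoc]
    calc ‖a * (b * ((a * b) ^ k * a))‖ ≤ ‖a‖ * (‖b‖ * ‖(a * b) ^ k * a‖) :=
          (norm_mul_le _ _).trans (by gcongr; exact norm_mul_le _ _)
      _ ≤ ‖a‖ * (‖b‖ * ((‖a‖ * ‖b‖) ^ k * ‖a‖)) := by gcongr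
      _ = (‖a‖ * ‖b‖) ^ (k + 1) * ‖a‖ := by ring

variable {G : 𝕜 → R} {D : R}

theorem hasDerivAt_mul_pow_mul (hG : ∀ t, HasDerivAt G (-(G t * D * G t)) t) (k : ℕ) (t : 𝕜) :
    HasDerivAt (fun s => (G s * D) ^ k * G s)
      (-((k + 1 : 𝕜) • ((G t * D) ^ (k + 1) * G t))) t := by
  induction k with
  | zero => simpa using hG t
  | succ k ih =>
    have hGD : HasDerivAt (fun s => G s * D) (-((G t * D) ^ 2)) t := by
      simpa [pow_two, mul_assoc] using (hG t).mul_const D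
    have h1 : (G t * D) ^ 2 * ((G t * D) ^ k * G t) = (G t * D) ^ (k + 2) * G t := by
      rw [← mul_assoc, ← pow_add, add_comm]
    have h2 : G t * D * ((G t * D) ^ (k + 1) * G t) = (G t * D) ^ (k + 2) * G t := by
      rw [← mul_assoc, ← pow_succ']
    convert hGD.mul ih using 1
    · ext s
      rw [pow_succ', mul_assoc]
      rfl
    · rw [neg_mul, h1, mul_neg, mul_smul_comm, h2]
      push_cast
      module

theorem iteratedDeriv_comp_mul_pow_mul {F : Type*} [NormedAddCommGroup F] [NormedSpace 𝕜 F]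
    (hG : ∀ t, HasDerivAt G (-(G t * D * G t)) t) (L : R →L[𝕜] F) (k : ℕ) :
    iteratedDeriv k (fun t => L (G t)) =
      fun t => ((-1) ^ k * k.factorial : 𝕜) • L ((G t * D) ^ k * G t) := by
  induction k with
  | zero => simp
  | succ k ih =>
    ext t
    rw [iteratedDeriv_succ, ih]
    refine HasDerivAt.deriv ?_
    convert ((L.hasFDerivAt.comp_hasDerivAt t (hasDerivAt_mul_pow_mul hG k t)).const_smul
      ((-1) ^ k * k.factorial : 𝕜)) using 1
    · rfl
    · rw [map_neg, map_smul, smul_neg, smul_smul, ← neg_smul]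
      congr 1
      push_cast [Nat.factorial_succ]
      ring

end ResolventCalculus

section WignerResolvent

open scoped Matrix Matrix.Norms.L2Operator

theorem Matrix.norm_entry_le_l2_opNorm {𝕜 m n : Type*} [RCLike 𝕜] [Fintype m] [Fintype n]
    [DecidableEq n] (X : Matrix m n 𝕜) (a : m) (b : n) : ‖X a b‖ ≤ ‖X‖ :=
  calc ‖X a b‖ = ‖((EuclideanSpace.equiv m 𝕜).symm (X *ᵥ EuclideanSpace.single b 1)) a‖ := by
        simp
    _ ≤ _ := PiLp.norm_apply_le _ a
    _ ≤ ‖X‖ * ‖EuclideanSpace.single b (1 : 𝕜)‖ := X.l2_opNorm_mulVec _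
    _ = ‖X‖ := by simp

variable {N : ℕ}

theorem isSelfAdjoint_wignerMatrix (x : Fin N × Fin N → ℝ) : IsSelfAdjoint (wignerMatrix N x) := by
  ext a b
  simp only [Matrix.star_apply, wignerMatrix, Complex.star_def, Complex.conj_ofReal]
  rcases lt_trichotomy a b with h | rfl | h
  · simp [h.le, not_le.2 h]
  · rfl
  · simp [h.le, not_le.2 h]

theorem wignerMatrix_update {i j : Fin N} (hij : i ≤ j) (x : Fin N × Fin N → ℝ) (t : ℝ) :
    wignerMatrix N (Function.update x (i, j) t) =
      wignerMatrix N x + (t - x (i, j)) • dA N i j := by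
  ext a b
  simp only [wignerMatrix, dA, Matrix.add_apply, Matrix.smul_apply, Function.update_apply,
    Prod.ext_iff]
  split_ifs <;> push_cast [Complex.real_smul, smul_zero, add_zero] <;> grind

theorem dA_eq_smul_diagonal_mul_permMatrix (i j : Fin N) :
    dA N i j = (((Real.sqrt N)⁻¹ : ℝ) : ℂ) •
      (Matrix.diagonal (fun a => if a = i ∨ a = j then 1 else 0) *
        (Equiv.swap i j).permMatrix ℂ) := by
  ext a b
  simp only [dA, Matrix.smul_apply, Matrix.diagonal_mul, Equiv.Perm.permMatrix,
    PEquiv.toMatrix_apply, Equiv.toPEquiv_apply, Option.mem_def, Option.some.injEq, Prod.ext_iff]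
  split_ifs <;> simp_all [Equiv.swap_apply_def] <;> grind

theorem norm_dA_le (i j : Fin N) : ‖dA N i j‖ ≤ (Real.sqrt N)⁻¹ := by
  rw [dA_eq_smul_diagonal_mul_permMatrix, norm_smul, Complex.norm_real,
    Real.norm_of_nonneg (by positivity)]
  refine mul_le_of_le_one_right (by positivity) ?_
  refine (Matrix.l2_opNorm_mul _ _).trans
    (mul_le_one₀ ?_ (norm_nonneg _) (Matrix.permMatrix_l2_opNorm_le _))
  rw [Matrix.l2_opNorm_diagonal]
  refine pi_norm_le_iff_of_nonneg zero_le_one |>.2 fun a => ?_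
  split_ifs <;> simp

theorem trace_dA_mul (i j : Fin N) (X : Matrix (Fin N) (Fin N) ℂ) :
    (dA N i j * X).trace = ∑ p ∈ {(i, j), (j, i)}, (((Real.sqrt N)⁻¹ : ℝ) : ℂ) * X p.2 p.1 := by
  have hentry : ∀ p : Fin N × Fin N, dA N i j p.1 p.2 * X p.2 p.1 =
      if p ∈ ({(i, j), (j, i)} : Finset _) then (((Real.sqrt N)⁻¹ : ℝ) : ℂ) * X p.2 p.1
      else 0 := by
    intro p
    simp [dA, ite_mul]
  simp only [Matrix.trace, Matrix.diag, Matrix.mul_apply]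
  rw [← Fintype.sum_prod_type' fun a b => dA N i j a b * X b a]
  simp only [hentry, Finset.sum_ite_mem, Finset.univ_inter]

theorem norm_trace_dA_mul_le (i j : Fin N) (X : Matrix (Fin N) (Fin N) ℂ) :
    ‖(dA N i j * X).trace‖ ≤ 2 * (Real.sqrt N)⁻¹ * ‖X‖ := by
  rw [trace_dA_mul]
  calc _ ≤ ∑ p ∈ {(i, j), (j, i)}, (Real.sqrt N)⁻¹ * ‖X‖ := by
        refine (norm_sum_le _ _).trans (Finset.sum_le_sum fun p _ => ?_)
        rw [norm_mul, Complex.norm_real, Real.norm_of_nonneg (by positivity)]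
        exact mul_le_mul_of_nonneg_left (X.norm_entry_le_l2_opNorm _ _) (by positivity)
    _ ≤ 2 * (Real.sqrt N)⁻¹ * ‖X‖ := by
        rw [Finset.sum_const, nsmul_eq_mul, mul_assoc]
        gcongr
        exact_mod_cast Finset.card_le_two

theorem norm_trace_mul_dA_pow_mul_le {G : Matrix (Fin N) (Fin N) ℂ} {C : ℝ} (hG : ‖G‖ ≤ C)
    (i j : Fin N) (k : ℕ) :
    ‖((G * dA N i j) ^ (k + 1) * G).trace‖ ≤ 2 * (Real.sqrt N)⁻¹ ^ (k + 1) * C ^ (k + 2) := by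
  have hcyc : ((G * dA N i j) ^ (k + 1) * G).trace =
      (dA N i j * ((G * dA N i j) ^ k * G * G)).trace := by
    rw [pow_succ', mul_assoc, mul_assoc, Matrix.trace_mul_comm, mul_assoc, mul_assoc]
  have hC : 0 ≤ C := (norm_nonneg G).trans hG
  calc _ ≤ 2 * (Real.sqrt N)⁻¹ * ‖(G * dA N i j) ^ k * G * G‖ := by
        rw [hcyc]; exact norm_trace_dA_mul_le i j _
    _ ≤ 2 * (Real.sqrt N)⁻¹ * ((C * (Real.sqrt N)⁻¹) ^ k * C * C) := by
        gcongr
        refine (norm_mul_le _ _).trans (mul_le_mul ?_ hG (norm_nonneg _) (by positivity))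
        refine (norm_mul_pow_mul_le _ _ k).trans ?_
        gcongr
        exact norm_dA_le i j
    _ = 2 * (Real.sqrt N)⁻¹ ^ (k + 1) * C ^ (k + 2) := by ring

theorem resolventW_eq_ringInverse (z : ℂ) (x : Fin N × Fin N → ℝ) :
    resolventW N z x = Ring.inverse (wignerMatrix N x - algebraMap ℂ _ z) := by
  rw [resolventW, Matrix.nonsing_inv_eq_ringInverse, Algebra.algebraMap_eq_smul_one]

theorem norm_resolventW_le {z : ℂ} (hz : z.im ≠ 0) (x : Fin N × Fin N → ℝ) :
    ‖resolventW N z x‖ ≤ |z.im|⁻¹ := by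
  rw [resolventW_eq_ringInverse]
  exact (isSelfAdjoint_wignerMatrix x).norm_ringInverse_sub_algebraMap_le hz

theorem hasDerivAt_resolventW_update {z : ℂ} (hz : z.im ≠ 0) {i j : Fin N} (hij : i ≤ j)
    (x : Fin N × Fin N → ℝ) (t : ℝ) :
    HasDerivAt (fun s => resolventW N z (Function.update x (i, j) s))
      (-(resolventW N z (Function.update x (i, j) t) * dA N i j *
        resolventW N z (Function.update x (i, j) t))) t := by
  simp only [resolventW_eq_ringInverse]
  refine HasDerivAt.ringInverse ?_ ((isSelfAdjoint_wignerMatrix _).isUnit_sub_algebraMap hz)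
  simp only [wignerMatrix_update hij]
  simpa using ((((hasDerivAt_id t).sub_const (x (i, j))).smul_const (dA N i j)).const_add
    (wignerMatrix N x)).sub_const (algebraMap ℂ _ z)

theorem pderivC_stieltjes {z : ℂ} (hz : z.im ≠ 0) {i j : Fin N} (hij : i ≤ j)
    (x : Fin N × Fin N → ℝ) (k : ℕ) :
    pderivC N (stieltjes N z) (i, j) k x = ((-1) ^ k * k.factorial : ℝ) •
      ((N : ℂ)⁻¹ * ((resolventW N z x * dA N i j) ^ k * resolventW N z x).trace) := by
  let L : Matrix (Fin N) (Fin N) ℂ →L[ℝ] ℂ :=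
    ((N : ℂ)⁻¹ • Matrix.traceLinearMap (Fin N) ℝ ℂ).toContinuousLinearMap
  have h := congrFun (iteratedDeriv_comp_mul_pow_mul
    (hasDerivAt_resolventW_update hz hij x) L k) (x (i, j))
  rw [Function.update_eq_self] at h
  exact h

theorem norm_pderivC_stieltjes_succ_le {z : ℂ} (hz : z.im ≠ 0) {i j : Fin N} (hij : i ≤ j)
    (x : Fin N × Fin N → ℝ) (k : ℕ) :
    ‖pderivC N (stieltjes N z) (i, j) (k + 1) x‖ ≤
      (k + 1).factorial * 2 * (|z.im| ^ (k + 2))⁻¹ * ((N : ℝ) ^ (((k : ℝ) + 3) / 2))⁻¹ := by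
  have hrpow : (N : ℝ) ^ (((k : ℝ) + 3) / 2) = N * Real.sqrt N ^ (k + 1) := by
    rw [show ((k : ℝ) + 3) / 2 = 1 + 1 / 2 * ((k + 1 : ℕ) : ℝ) by push_cast; ring,
      Real.rpow_one_add' (Nat.cast_nonneg _) (by positivity), Real.rpow_mul (Nat.cast_nonneg _),
      Real.rpow_natCast, Real.sqrt_eq_rpow]
  rw [pderivC_stieltjes hz hij, norm_smul, norm_mul, norm_mul, norm_pow, norm_neg, norm_one,
    one_pow, one_mul, RCLike.norm_natCast, norm_inv, Complex.norm_natCast]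
  calc _ ≤ ((k + 1).factorial : ℝ) *
        ((N : ℝ)⁻¹ * (2 * (Real.sqrt N)⁻¹ ^ (k + 1) * |z.im|⁻¹ ^ (k + 2))) := by
        gcongr
        exact norm_trace_mul_dA_pow_mul_le (norm_resolventW_le hz x) i j k
    _ = _ := by
        rw [hrpow, mul_inv, inv_pow, inv_pow]
        ring

end WignerResolvent

theorem stmt9_general
    {N : ℕ} (z : ℂ) (hz : z.im ≠ 0)
    (x : Fin N × Fin N → ℝ) (i j : Fin N) (hij : i ≤ j) :
    ‖pderivC N (stieltjes N z) (i, j) 1 x‖ ≤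
      2 * (|z.im| ^ 2)⁻¹ * ((N : ℝ) ^ ((3 : ℝ) / 2))⁻¹ ∧
    ‖pderivC N (stieltjes N z) (i, j) 2 x‖ ≤
      4 * (|z.im| ^ 3)⁻¹ * ((N : ℝ) ^ 2)⁻¹ ∧
    ‖pderivC N (stieltjes N z) (i, j) 3 x‖ ≤
      12 * (|z.im| ^ 4)⁻¹ * ((N : ℝ) ^ ((5 : ℝ) / 2))⁻¹ := by
  refine ⟨(norm_pderivC_stieltjes_succ_le hz hij x 0).trans_eq ?_,
    (norm_pderivC_stieltjes_succ_le hz hij x 1).trans_eq ?_,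
    (norm_pderivC_stieltjes_succ_le hz hij x 2).trans_eq ?_⟩ <;>
  norm_num [Nat.factorial]

theorem stmt9
    {N : ℕ} (hN : 1 ≤ N) (z : ℂ) (hz : z.im ≠ 0)
    (x : Fin N × Fin N → ℝ) (i j : Fin N) (hij : i ≤ j) :
    ‖pderivC N (stieltjes N z) (i, j) 1 x‖ ≤
      2 * (|z.im| ^ 2)⁻¹ * ((N : ℝ) ^ ((3 : ℝ) / 2))⁻¹ ∧
    ‖pderivC N (stieltjes N z) (i, j) 2 x‖ ≤
      4 * (|z.im| ^ 3)⁻¹ * ((N : ℝ) ^ 2)⁻¹ ∧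
    ‖pderivC N (stieltjes N z) (i, j) 3 x‖ ≤
      12 * (|z.im| ^ 4)⁻¹ * ((N : ℝ) ^ ((5 : ℝ) / 2))⁻¹ :=
  stmt9_general z hz x i j hij
end

section
/- Fix β > 0, h ∈ ℝ and N ≥ 2. For x = (x_{ij})_{1≤i<j≤N} define F(x) := N⁻¹ log Σ_{σ∈{−1,1}^N} exp( β N^{-1/2} Σ_{i<j} x_{ij} σᵢσⱼ + β h Σ_{i≤N} σᵢ ). Then λ₂(F) ≤ 3 β² N⁻² and λ₃(F) ≤ 13 β³ N^{-5/2}. -/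
open MeasureTheory ProbabilityTheory

/-- `N ⬝ f_σ(x) = β N^{-1/2} Σ_{i<j} x_{ij} σ_i σ_j + β h Σ_i σ_i`, where the
spin configuration `σ ∈ {-1,1}^N` is encoded by `s : Fin N → Bool`. -/
noncomputable def skEnergy (N : ℕ) (β h : ℝ) (x : Fin N × Fin N → ℝ)
    (s : Fin N → Bool) : ℝ :=
  β * (Real.sqrt N)⁻¹ *
      ∑ q ∈ Finset.univ.filter (fun q : Fin N × Fin N => q.1 < q.2),
        x q * (if s q.1 then (1 : ℝ) else -1) * (if s q.2 then (1 : ℝ) else -1) +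
    β * h * ∑ i, (if s i then (1 : ℝ) else -1)

/-- The free energy `F(x) = N⁻¹ log Σ_σ exp(β N^{-1/2} Σ_{i<j} x_{ij} σ_i σ_j
+ β h Σ_i σ_i)` of the S-K model. -/
noncomputable def skFreeEnergy (N : ℕ) (β h : ℝ) (x : Fin N × Fin N → ℝ) : ℝ :=
  (N : ℝ)⁻¹ * Real.log (∑ s : Fin N → Bool, Real.exp (skEnergy N β h x s))

/-- The `p`-fold partial derivative in the coordinate `q` of a function of the
coupling variables `(x_{ij})`. -/
noncomputable def pderivSK (N : ℕ) (f : (Fin N × Fin N → ℝ) → ℝ)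
    (q : Fin N × Fin N) (p : ℕ) (x : Fin N × Fin N → ℝ) : ℝ :=
  iteratedDeriv p (fun t => f (Function.update x q t)) (x q)

/-- The set whose supremum is `λ_r(f)`, the coordinates being the pairs
`(i,j)` with `i < j`, with all of `ℝⁿ` as the domain. -/
def lamSetSK (N : ℕ) (f : (Fin N × Fin N → ℝ) → ℝ) (r : ℕ) : Set ℝ :=
  { y | ∃ (q : Fin N × Fin N) (p : ℕ) (x : Fin N × Fin N → ℝ),
      q.1 < q.2 ∧ 1 ≤ p ∧ p ≤ r ∧
      y = |pderivSK N f q p x| ^ ((r : ℝ) / (p : ℝ)) }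

noncomputable def lamSK (N : ℕ) (f : (Fin N × Fin N → ℝ) → ℝ) (r : ℕ) : ℝ :=
  sSup (lamSetSK N f r)

/-! Along one coupling `q = (i, j)` the energy is affine with slope `b_σ = β N^{-1/2} σ_i σ_j`, so
`t ↦ F(x[q ↦ t])` is `N⁻¹ log Σ_σ exp (A_σ + b_σ t)`. Its derivatives in `t` are
polynomials in the Gibbs moments `m_k = ⟨b^k⟩` (since `m_k' = m_{k+1} - m_k m_1`), and `|m_k| ≤ c^k`
with `c = β N^{-1/2}` bounds the `p`-th derivative by `p! c^p` for `p ≤ 3`. Raising to the power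
`r / p` and using `N ≥ 1` gives `(p!)^{r/p} β^r N^{-1-r/2}`, and `max_p (p!)^{r/p}` is `2` for `r = 2`
and `6` for `r = 3`. -/

open Real Finset Nat

section LogSumExp

variable {ι : Type*} [Fintype ι] (A b : ι → ℝ)

noncomputable def expMomentSum (k : ℕ) (t : ℝ) : ℝ :=
  ∑ s, b s ^ k * exp (A s + b s * t)

noncomputable def gibbsMoment (k : ℕ) (t : ℝ) : ℝ :=
  expMomentSum A b k t / expMomentSum A b 0 t

lemma expMomentSum_zero_pos [Nonempty ι] (t : ℝ) : 0 < expMomentSum A b 0 t := by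
  simp only [expMomentSum, pow_zero, one_mul]
  exact Finset.sum_pos (fun s _ => exp_pos _) univ_nonempty

lemma hasDerivAt_expMomentSum (k : ℕ) (t : ℝ) :
    HasDerivAt (expMomentSum A b k) (expMomentSum A b (k + 1) t) t := by
  refine HasDerivAt.fun_sum fun s _ => ?_
  have hlin : HasDerivAt (fun t => A s + b s * t) (b s) t := by
    simpa using ((hasDerivAt_id t).const_mul (b s)).const_add (A s)
  exact (hlin.exp.const_mul (b s ^ k)).congr_deriv (by ring)

lemma hasDerivAt_gibbsMoment [Nonempty ι] (k : ℕ) (t : ℝ) :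
    HasDerivAt (gibbsMoment A b k)
      (gibbsMoment A b (k + 1) t - gibbsMoment A b k t * gibbsMoment A b 1 t) t := by
  have hZ := (expMomentSum_zero_pos A b t).ne'
  refine ((hasDerivAt_expMomentSum A b k t).div (hasDerivAt_expMomentSum A b 0 t) hZ).congr_deriv ?_
  simp only [gibbsMoment]
  field_simp

lemma deriv_gibbsMoment [Nonempty ι] (k : ℕ) :
    deriv (gibbsMoment A b k) =
      fun t => gibbsMoment A b (k + 1) t - gibbsMoment A b k t * gibbsMoment A b 1 t :=
  funext fun t => (hasDerivAt_gibbsMoment A b k t).deriv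

lemma deriv_log_expMomentSum_zero [Nonempty ι] :
    deriv (fun t => log (expMomentSum A b 0 t)) = gibbsMoment A b 1 :=
  funext fun t =>
    ((hasDerivAt_expMomentSum A b 0 t).log (expMomentSum_zero_pos A b t).ne').deriv

lemma abs_gibbsMoment_le [Nonempty ι] {c : ℝ} (hb : ∀ s, |b s| ≤ c) (k : ℕ) (t : ℝ) :
    |gibbsMoment A b k t| ≤ c ^ k := by
  have hZ := expMomentSum_zero_pos A b t
  rw [gibbsMoment, abs_div, abs_of_pos hZ, div_le_iff₀ hZ, expMomentSum, expMomentSum,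
    Finset.mul_sum]
  refine (abs_sum_le_sum_abs _ _).trans (sum_le_sum fun s _ => ?_)
  rw [abs_mul, abs_pow, abs_of_pos (exp_pos _), pow_zero, one_mul]
  gcongr
  exact hb s

lemma abs_iteratedDeriv_log_sum_exp_le [Nonempty ι] {c : ℝ} (hb : ∀ s, |b s| ≤ c)
    {p : ℕ} (hp1 : 1 ≤ p) (hp3 : p ≤ 3) (t : ℝ) :
    |iteratedDeriv p (fun t => log (∑ s, exp (A s + b s * t))) t| ≤ p ! * c ^ p := by
  have hlog : (fun t => log (∑ s, exp (A s + b s * t))) =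
      fun t => log (expMomentSum A b 0 t) := by
    simp [expMomentSum]
  set m := gibbsMoment A b
  have hm := abs_gibbsMoment_le A b hb
  have hc : 0 ≤ c := by simpa using (abs_nonneg (m 1 t)).trans (hm 1 t)
  rw [hlog]
  interval_cases p
  · simpa [deriv_log_expMomentSum_zero] using hm 1 t
  · have hd2 : iteratedDeriv 2 (fun t => log (expMomentSum A b 0 t)) t =
        m 2 t - m 1 t * m 1 t := by
      simp [iteratedDeriv_succ, deriv_log_expMomentSum_zero, deriv_gibbsMoment, m]
    rw [hd2]
    calc |m 2 t - m 1 t * m 1 t| ≤ |m 2 t| + |m 1 t| * |m 1 t| := by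
          rw [← abs_mul]; exact abs_sub _ _
      _ ≤ c ^ 2 + c ^ 1 * c ^ 1 := by gcongr <;> exact hm _ t
      _ = (2 ! : ℕ) * c ^ 2 := by norm_num; ring
  · have hd3 : iteratedDeriv 3 (fun t => log (expMomentSum A b 0 t)) t =
        m 3 t - 3 * (m 2 t * m 1 t) + 2 * m 1 t ^ 3 := by
      have h := ((hasDerivAt_gibbsMoment A b 2 t).fun_sub
        ((hasDerivAt_gibbsMoment A b 1 t).fun_mul (hasDerivAt_gibbsMoment A b 1 t))).deriv
      simp only [iteratedDeriv_succ, iteratedDeriv_zero, deriv_log_expMomentSum_zero,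
        deriv_gibbsMoment]
      rw [h]
      ring
    rw [hd3]
    calc |m 3 t - 3 * (m 2 t * m 1 t) + 2 * m 1 t ^ 3|
        ≤ |m 3 t| + 3 * (|m 2 t| * |m 1 t|) + 2 * |m 1 t| ^ 3 := by
          refine (abs_add_le _ _).trans (add_le_add ((abs_sub _ _).trans ?_) ?_) <;>
            simp [abs_mul, abs_pow]
      _ ≤ c ^ 3 + 3 * (c ^ 2 * c ^ 1) + 2 * (c ^ 1) ^ 3 := by gcongr <;> exact hm _ t
      _ = (3 ! : ℕ) * c ^ 3 := by norm_num; ring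

end LogSumExp

lemma abs_rpow_div_le {a C β N : ℝ} {p r : ℕ} (hN : 1 ≤ N) (hC : 0 ≤ C) (hβ : 0 ≤ β)
    (hp : 1 ≤ p) (hpr : p ≤ r) (ha : |a| ≤ C * β ^ p * N ^ (-(1 + p / 2 : ℝ))) :
    |a| ^ ((r : ℝ) / p) ≤ C ^ ((r : ℝ) / p) * β ^ r * N ^ (-(1 + r / 2 : ℝ)) := by
  have hp0 : (0 : ℝ) < p := by exact_mod_cast hp
  have hrp : 1 ≤ (r : ℝ) / p := by rw [le_div_iff₀ hp0, one_mul]; exact_mod_cast hpr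
  have hN0 : 0 ≤ N := zero_le_one.trans hN
  calc |a| ^ ((r : ℝ) / p) ≤ (C * β ^ p * N ^ (-(1 + p / 2 : ℝ))) ^ ((r : ℝ) / p) := by
        gcongr
    _ = C ^ ((r : ℝ) / p) * β ^ r * N ^ (-((r : ℝ) / p + r / 2)) := by
        rw [mul_rpow (by positivity) (by positivity), mul_rpow hC (by positivity),
          ← rpow_natCast β p, ← rpow_mul hβ, ← rpow_mul hN0, ← rpow_natCast β r]
        congr 3 <;> field_simp
    _ ≤ C ^ ((r : ℝ) / p) * β ^ r * N ^ (-(1 + r / 2 : ℝ)) := by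
        gcongr

section SherringtonKirkpatrick

variable {N : ℕ} (β h : ℝ)

def spin (s : Fin N → Bool) (i : Fin N) : ℝ := if s i then 1 else -1

lemma abs_spin (s : Fin N → Bool) (i : Fin N) : |spin s i| = 1 := by
  unfold spin; split_ifs <;> norm_num

lemma skEnergy_eq (x : Fin N × Fin N → ℝ) (s : Fin N → Bool) :
    skEnergy N β h x s = β * (√N)⁻¹ *
      ∑ q ∈ univ.filter (fun q : Fin N × Fin N => q.1 < q.2), x q * spin s q.1 * spin s q.2 +
      β * h * ∑ i, spin s i :=
  rfl

lemma skEnergy_update {q : Fin N × Fin N} (hq : q.1 < q.2) (x : Fin N × Fin N → ℝ)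
    (s : Fin N → Bool) (t : ℝ) :
    skEnergy N β h (Function.update x q t) s =
      skEnergy N β h (Function.update x q 0) s + β * (√N)⁻¹ * (spin s q.1 * spin s q.2) * t := by
  have hmem : q ∈ univ.filter (fun q : Fin N × Fin N => q.1 < q.2) := by simp [hq]
  have hrest : ∀ u : ℝ, ∑ q' ∈ (univ.filter (fun q : Fin N × Fin N => q.1 < q.2)).erase q,
      Function.update x q u q' * spin s q'.1 * spin s q'.2 =
      ∑ q' ∈ (univ.filter (fun q : Fin N × Fin N => q.1 < q.2)).erase q,
        x q' * spin s q'.1 * spin s q'.2 := fun u =>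
    sum_congr rfl fun q' hq' => by rw [Function.update_of_ne (ne_of_mem_erase hq')]
  rw [skEnergy_eq, skEnergy_eq, ← add_sum_erase _ _ hmem, ← add_sum_erase _ _ hmem, hrest,
    hrest, Function.update_self, Function.update_self]
  ring

lemma skFreeEnergy_update {q : Fin N × Fin N} (hq : q.1 < q.2) (x : Fin N × Fin N → ℝ) :
    (fun t => skFreeEnergy N β h (Function.update x q t)) = fun t =>
      (N : ℝ)⁻¹ * log (∑ s, exp (skEnergy N β h (Function.update x q 0) s +
        β * (√N)⁻¹ * (spin s q.1 * spin s q.2) * t)) := by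
  funext t
  rw [skFreeEnergy]
  congr 2
  exact sum_congr rfl fun s _ => by rw [skEnergy_update β h hq x s t]

lemma abs_pderivSK_skFreeEnergy_le (hβ : 0 ≤ β) {q : Fin N × Fin N} (hq : q.1 < q.2)
    {p : ℕ} (hp1 : 1 ≤ p) (hp3 : p ≤ 3) (x : Fin N × Fin N → ℝ) :
    |pderivSK N (skFreeEnergy N β h) q p x| ≤ p ! * β ^ p * (N : ℝ) ^ (-(1 + p / 2 : ℝ)) := by
  have hN : (0 : ℝ) < N := by exact_mod_cast Fin.pos q.1
  have hb : ∀ s : Fin N → Bool, |β * (√N)⁻¹ * (spin s q.1 * spin s q.2)| ≤ β * (√N)⁻¹ := by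
    intro s
    rw [abs_mul, abs_mul, abs_mul, abs_spin, abs_spin, abs_of_nonneg hβ,
      abs_of_nonneg (inv_nonneg.2 (sqrt_nonneg _)), mul_one, mul_one]
  have hscale : (N : ℝ)⁻¹ * (β * (√N)⁻¹) ^ p = β ^ p * (N : ℝ) ^ (-(1 + p / 2 : ℝ)) := by
    rw [mul_pow, inv_pow, sqrt_eq_rpow, ← rpow_mul_natCast hN.le, rpow_neg hN.le,
      rpow_add hN, rpow_one, mul_inv]
    ring_nf
  rw [pderivSK, skFreeEnergy_update β h hq, iteratedDeriv_const_mul_field, abs_mul,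
    abs_of_pos (inv_pos.mpr hN)]
  calc (N : ℝ)⁻¹ * |iteratedDeriv p _ (x q)| ≤ (N : ℝ)⁻¹ * (p ! * (β * (√N)⁻¹) ^ p) := by
        gcongr
        exact abs_iteratedDeriv_log_sum_exp_le _ _ hb hp1 hp3 _
    _ = p ! * ((N : ℝ)⁻¹ * (β * (√N)⁻¹) ^ p) := by ring
    _ = _ := by rw [hscale, mul_assoc]

lemma lamSK_skFreeEnergy_le (hβ : 0 ≤ β) {r : ℕ} (hr : r ≤ 3) {C : ℝ}
    (hC0 : 0 ≤ C) (hC : ∀ p, 1 ≤ p → p ≤ r → ((p ! : ℕ) : ℝ) ^ ((r : ℝ) / p) ≤ C) :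
    lamSK N (skFreeEnergy N β h) r ≤ C * β ^ r * (N : ℝ) ^ (-(1 + r / 2 : ℝ)) := by
  refine Real.sSup_le ?_ (by positivity)
  rintro _ ⟨q, p, x, hq, hp1, hpr, rfl⟩
  have hN : (1 : ℝ) ≤ N := by exact_mod_cast Fin.pos q.1
  calc |pderivSK N (skFreeEnergy N β h) q p x| ^ ((r : ℝ) / p)
      ≤ ((p ! : ℕ) : ℝ) ^ ((r : ℝ) / p) * β ^ r * (N : ℝ) ^ (-(1 + r / 2 : ℝ)) :=
        abs_rpow_div_le hN (by positivity) hβ hp1 hpr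
          (abs_pderivSK_skFreeEnergy_le β h hβ hq hp1 (hpr.trans hr) x)
    _ ≤ C * β ^ r * (N : ℝ) ^ (-(1 + r / 2 : ℝ)) := by
        gcongr
        exact hC p hp1 hpr

end SherringtonKirkpatrick

theorem stmt12_general {N : ℕ} (β h : ℝ) (hβ : 0 < β) :
    lamSK N (skFreeEnergy N β h) 2 ≤ 3 * β ^ 2 * ((N : ℝ) ^ 2)⁻¹ ∧
    lamSK N (skFreeEnergy N β h) 3 ≤
      13 * β ^ 3 * ((N : ℝ) ^ ((5 : ℝ) / 2))⁻¹ := by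
  have hN : (0 : ℝ) ≤ N := N.cast_nonneg
  constructor
  · convert lamSK_skFreeEnergy_le β h hβ.le (N := N) (r := 2) (C := 3) (by norm_num) (by norm_num)
      (fun p hp1 hp2 => by interval_cases p <;> norm_num) using 2
    rw [rpow_neg hN]
    norm_num
  · have h32 : (2 : ℝ) ^ ((3 : ℝ) / 2) ≤ 13 :=
      calc (2 : ℝ) ^ ((3 : ℝ) / 2) ≤ 2 ^ (2 : ℝ) := by gcongr <;> norm_num
        _ ≤ 13 := by norm_num
    convert lamSK_skFreeEnergy_le β h hβ.le (N := N) (r := 3) (C := 13) le_rfl (by norm_num)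
      (fun p hp1 hp3 => by interval_cases p <;> norm_num [h32]) using 2
    rw [rpow_neg hN]
    norm_num

theorem stmt12 {N : ℕ} (hN : 2 ≤ N) (β h : ℝ) (hβ : 0 < β) :
    lamSK N (skFreeEnergy N β h) 2 ≤ 3 * β ^ 2 * ((N : ℝ) ^ 2)⁻¹ ∧
    lamSK N (skFreeEnergy N β h) 3 ≤
      13 * β ^ 3 * ((N : ℝ) ^ ((5 : ℝ) / 2))⁻¹ :=
  stmt12_general β h hβ
end

section
/- Let I be an open interval containing 0, let 𝔉 be a finite nonempty collection of functions Iⁿ → ℝ, each thrice differentiable in each coordinate, with C_r := sup{ |∂ᵢʳ f(x)| : 1 ≤ i ≤ n, f ∈ 𝔉, x ∈ Iⁿ } < ∞ for r = 1, 2, 3, and let α ≥ 1. For each i define e_i(x) := Σ_{f∈𝔉} α ∂ᵢf(x) · p(x,f), where p(x,f) := e^{α f(x)} / Σ_{f'∈𝔉} e^{α f'(x)}. Then for all i and all x ∈ Iⁿ: |e_i(x)| ≤ α C₁, |∂ᵢ e_i(x)| ≤ α²(C₂ + 2C₁²), and |∂ᵢ² e_i(x)| ≤ α³(C₃ + 6C₁C₂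 + 6C₁³). -/
open MeasureTheory ProbabilityTheory

/-- The `p`-fold partial derivative of `f` in the `i`-th coordinate, at `x`. -/
noncomputable def pderiv (n : ℕ) (f : (Fin n → ℝ) → ℝ) (i : Fin n) (p : ℕ)
    (x : Fin n → ℝ) : ℝ :=
  iteratedDeriv p (fun t => f (Function.update x i t)) (x i)

/-- `f` is thrice differentiable in each coordinate on `Iⁿ`. -/
def CoordDiff3 (n : ℕ) (I : Set ℝ) (f : (Fin n → ℝ) → ℝ) : Prop :=
  ∀ (i : Fin n) (x : Fin n → ℝ), (∀ j, x j ∈ I) →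
    ∀ p < 3, DifferentiableOn ℝ
      (iteratedDeriv p fun t => f (Function.update x i t)) I

/-- The set whose supremum is `λ_r(f)`. -/
def lamSet (n : ℕ) (I : Set ℝ) (f : (Fin n → ℝ) → ℝ) (r : ℕ) : Set ℝ :=
  { y | ∃ (i : Fin n) (p : ℕ) (x : Fin n → ℝ),
      1 ≤ p ∧ p ≤ r ∧ (∀ j, x j ∈ I) ∧
      y = |pderiv n f i p x| ^ ((r : ℝ) / (p : ℝ)) }

/-- `λ_r(f) = sup { |∂ᵢᵖ f(x)|^{r/p} : 1 ≤ i ≤ n, 1 ≤ p ≤ r, x ∈ Iⁿ }`. -/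
noncomputable def lam (n : ℕ) (I : Set ℝ) (f : (Fin n → ℝ) → ℝ) (r : ℕ) : ℝ :=
  sSup (lamSet n I f r)

/-- The Gibbs probability `p(x, k) = e^{α f_k(x)} / Σ_{k'} e^{α f_{k'}(x)}`. -/
noncomputable def gibbsP {κ : Type} [Fintype κ] (n : ℕ)
    (f : κ → (Fin n → ℝ) → ℝ) (α : ℝ) (x : Fin n → ℝ) (k : κ) : ℝ :=
  Real.exp (α * f k x) / ∑ k', Real.exp (α * f k' x)

/-- `e_i(x) = Σ_k α ∂ᵢ f_k(x) · p(x, k)`. -/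
noncomputable def gibbsE {κ : Type} [Fintype κ] (n : ℕ)
    (f : κ → (Fin n → ℝ) → ℝ) (α : ℝ) (i : Fin n) (x : Fin n → ℝ) : ℝ :=
  ∑ k, α * pderiv n (f k) i 1 x * gibbsP n f α x k

/-!
On the line through `x` in direction `i`, `e_i` is `α` times the Gibbs average `⟨g'⟩` of the
slopes of the slices `g_k t = f_k (update x i t)`. Differentiating a Gibbs average gives
`⟨h⟩' = ⟨h'⟩ + α Cov(h, g')`, so `e_i' = α⟨g''⟩ + α² Var g'` and
`e_i'' = α⟨g'''⟩ + α² Cov(g'', g') + α² (Var g')'`. Every term is an average or a covariance of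
products of `g'`, `g''`, `g'''`, bounded via `|⟨h⟩| ≤ sup |h|` and
`|Cov(a, b)| ≤ 2 sup |a| sup |b|`.
-/

open Finset

lemma abs_add_mul_le {x y c : ℝ} (hc : 0 ≤ c) : |x + c * y| ≤ |x| + c * |y| := by
  simpa only [abs_mul, abs_of_nonneg hc] using abs_add_le x (c * y)

namespace Gibbs

variable {κ : Type*}

lemma abs_mul_apply_le {a b : κ → ℝ → ℝ} {k : κ} {t A B : ℝ} (hA : |a k t| ≤ A)
    (hB : |b k t| ≤ B) : |(a * b) k t| ≤ A * B := by
  rw [Pi.mul_apply, Pi.mul_apply, abs_mul]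
  exact mul_le_mul hA hB (abs_nonneg _) ((abs_nonneg _).trans hA)

variable [Fintype κ] (α : ℝ) (g : κ → ℝ → ℝ)

noncomputable def weight (t : ℝ) (k : κ) : ℝ :=
  Real.exp (α * g k t) / ∑ k', Real.exp (α * g k' t)

noncomputable def avg (h : κ → ℝ → ℝ) (t : ℝ) : ℝ :=
  ∑ k, h k t * weight α g t k

noncomputable def cov (a b : κ → ℝ → ℝ) (t : ℝ) : ℝ :=
  avg α g (a * b) t - avg α g a t * avg α g b t

lemma sum_exp_pos (t : ℝ) (k : κ) : 0 < ∑ k', Real.exp (α * g k' t) :=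
  sum_pos (fun _ _ => Real.exp_pos _) ⟨k, mem_univ k⟩

lemma weight_pos (t : ℝ) (k : κ) : 0 < weight α g t k :=
  div_pos (Real.exp_pos _) (sum_exp_pos α g t k)

lemma sum_weight [Nonempty κ] (t : ℝ) : ∑ k, weight α g t k = 1 := by
  obtain ⟨k⟩ := ‹Nonempty κ›
  simp only [weight]
  rw [← sum_div, div_self (sum_exp_pos α g t k).ne']

lemma abs_avg_le [Nonempty κ] {h : κ → ℝ → ℝ} {t M : ℝ} (hM : ∀ k, |h k t| ≤ M) :
    |avg α g h t| ≤ M :=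
  calc |avg α g h t| ≤ ∑ k, |h k t| * weight α g t k := by
        refine (abs_sum_le_sum_abs _ _).trans_eq (sum_congr rfl fun k _ => ?_)
        rw [abs_mul, abs_of_pos (weight_pos α g t k)]
    _ ≤ ∑ k, M * weight α g t k :=
        sum_le_sum fun k _ => mul_le_mul_of_nonneg_right (hM k) (weight_pos α g t k).le
    _ = M := by rw [← mul_sum, sum_weight α g, mul_one]

lemma abs_cov_le [Nonempty κ] {a b : κ → ℝ → ℝ} {t A B : ℝ}
    (hA : ∀ k, |a k t| ≤ A) (hB : ∀ k, |b k t| ≤ B) : |cov α g a b t| ≤ 2 * (A * B) := by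
  obtain ⟨k⟩ := ‹Nonempty κ›
  have hA0 : 0 ≤ A := (abs_nonneg _).trans (hA k)
  have hAB : ∀ k, |(a * b) k t| ≤ A * B := fun k => abs_mul_apply_le (hA k) (hB k)
  have hprod : |avg α g a t * avg α g b t| ≤ A * B := by
    rw [abs_mul]
    exact mul_le_mul (abs_avg_le α g hA) (abs_avg_le α g hB) (abs_nonneg _) hA0
  unfold cov
  linarith [abs_sub (avg α g (a * b) t) (avg α g a t * avg α g b t), abs_avg_le α g hAB]

variable {g g' : κ → ℝ → ℝ} {t : ℝ}

lemma hasDerivAt_weight (hg : ∀ k, HasDerivAt (g k) (g' k t) t) (k : κ) :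
    HasDerivAt (fun t => weight α g t k) (α * weight α g t k * (g' k t - avg α g g' t)) t := by
  have hS0 := (sum_exp_pos α g t k).ne'
  have hnum : HasDerivAt (fun t => Real.exp (α * g k t))
      (Real.exp (α * g k t) * (α * g' k t)) t := ((hg k).const_mul α).exp
  have hden : HasDerivAt (fun t => ∑ k', Real.exp (α * g k' t))
      (∑ k', Real.exp (α * g k' t) * (α * g' k' t)) t :=
    HasDerivAt.fun_sum fun j _ => ((hg j).const_mul α).exp
  refine (hnum.div hden hS0).congr_deriv ?_
  have havg : avg α g g' t
      = (∑ k', Real.exp (α * g k' t) * g' k' t) / ∑ k', Real.exp (α * g k' t) := by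
    simp only [avg, weight, sum_div, mul_div_assoc']
    exact sum_congr rfl fun _ _ => by ring
  have hS' : ∑ k', Real.exp (α * g k' t) * (α * g' k' t)
      = α * ∑ k', Real.exp (α * g k' t) * g' k' t := by
    rw [mul_sum]; exact sum_congr rfl fun _ _ => by ring
  rw [havg, weight, hS']
  field_simp

lemma hasDerivAt_avg (hg : ∀ k, HasDerivAt (g k) (g' k t) t) {h h' : κ → ℝ → ℝ}
    (hh : ∀ k, HasDerivAt (h k) (h' k t) t) :
    HasDerivAt (avg α g h) (avg α g h' t + α * cov α g h g' t) t := by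
  refine (HasDerivAt.fun_sum fun k _ => (hh k).mul (hasDerivAt_weight α hg k)).congr_deriv ?_
  rw [cov]
  generalize avg α g g' t = A
  simp only [avg, Pi.mul_apply, mul_sum, sum_mul, ← sum_sub_distrib, ← sum_add_distrib]
  exact sum_congr rfl fun _ _ => by ring

lemma hasDerivAt_cov_self (hg : ∀ k, HasDerivAt (g k) (g' k t) t) {a a' : κ → ℝ → ℝ}
    (ha : ∀ k, HasDerivAt (a k) (a' k t) t) :
    HasDerivAt (cov α g a a) (2 * avg α g (a * a') t + α * cov α g (a * a) g' t
      - 2 * avg α g a t * (avg α g a' t + α * cov α g a g' t)) t := by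
  have hsq : ∀ k, HasDerivAt ((a * a) k) (2 * (a * a') k t) t := fun k =>
    ((ha k).mul (ha k)).congr_deriv (by simp only [Pi.mul_apply]; ring)
  have havg2 : avg α g (fun k t => 2 * (a * a') k t) t = 2 * avg α g (a * a') t := by
    simp only [avg, mul_sum, mul_assoc]
  have hA := hasDerivAt_avg α hg ha
  have hAA := hasDerivAt_avg α hg (h' := fun k t => 2 * (a * a') k t) hsq
  refine (hAA.sub (hA.mul hA)).congr_deriv ?_
  rw [havg2]
  ring

variable {g1 g2 g3 : κ → ℝ → ℝ}

lemma hasDerivAt_mean (hg : ∀ k, HasDerivAt (g k) (g1 k t) t)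
    (hg1 : ∀ k, HasDerivAt (g1 k) (g2 k t) t) :
    HasDerivAt (fun s => α * avg α g g1 s) (α * (avg α g g2 t + α * cov α g g1 g1 t)) t :=
  (hasDerivAt_avg α hg hg1).const_mul α

lemma hasDerivAt_deriv_mean (hg : ∀ k, HasDerivAt (g k) (g1 k t) t)
    (hg1 : ∀ k, HasDerivAt (g1 k) (g2 k t) t) (hg2 : ∀ k, HasDerivAt (g2 k) (g3 k t) t) :
    HasDerivAt (fun s => α * (avg α g g2 s + α * cov α g g1 g1 s))
      (α * (avg α g g3 t + α * (cov α g g2 g1 t + (2 * avg α g (g1 * g2) t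
        + α * cov α g (g1 * g1) g1 t - 2 * avg α g g1 t * (avg α g g2 t + α * cov α g g1 g1 t)))))
      t := by
  refine (((hasDerivAt_avg α hg hg2).add
    ((hasDerivAt_cov_self α hg hg1).const_mul α)).const_mul α).congr_deriv ?_
  ring

open Filter Topology in
theorem abs_mean_derivatives_le [Nonempty κ] {I : Set ℝ} (hI : IsOpen I) (hα : 1 ≤ α)
    {C1 C2 C3 : ℝ}
    (hg : ∀ k, ∀ t ∈ I, HasDerivAt (g k) (g1 k t) t)
    (hg1 : ∀ k, ∀ t ∈ I, HasDerivAt (g1 k) (g2 k t) t)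
    (hg2 : ∀ k, ∀ t ∈ I, HasDerivAt (g2 k) (g3 k t) t)
    (hC1 : ∀ k, ∀ t ∈ I, |g1 k t| ≤ C1) (hC2 : ∀ k, ∀ t ∈ I, |g2 k t| ≤ C2)
    (hC3 : ∀ k, ∀ t ∈ I, |g3 k t| ≤ C3) (ht : t ∈ I) :
    |α * avg α g g1 t| ≤ α * C1 ∧
    |deriv (fun s => α * avg α g g1 s) t| ≤ α ^ 2 * (C2 + 2 * C1 ^ 2) ∧
    |deriv (deriv (fun s => α * avg α g g1 s)) t| ≤
      α ^ 3 * (C3 + 6 * C1 * C2 + 6 * C1 ^ 3) := by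
  have hα0 : 0 ≤ α := zero_le_one.trans hα
  obtain ⟨k⟩ := ‹Nonempty κ›
  have hC1₀ : 0 ≤ C1 := (abs_nonneg _).trans (hC1 k t ht)
  have hC2₀ : 0 ≤ C2 := (abs_nonneg _).trans (hC2 k t ht)
  have hC3₀ : 0 ≤ C3 := (abs_nonneg _).trans (hC3 k t ht)
  have hC1t := fun k => hC1 k t ht
  have hC2t := fun k => hC2 k t ht
  have hmean : |avg α g g1 t| ≤ C1 := abs_avg_le α g hC1t
  have hD : |avg α g g2 t + α * cov α g g1 g1 t| ≤ C2 + α * (2 * (C1 * C1)) :=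
    (abs_add_mul_le hα0).trans (by gcongr; exacts [abs_avg_le α g hC2t, abs_cov_le α g hC1t hC1t])
  have hvar : |2 * avg α g (g1 * g2) t + α * cov α g (g1 * g1) g1 t
      - 2 * avg α g g1 t * (avg α g g2 t + α * cov α g g1 g1 t)|
      ≤ 2 * (C1 * C2) + α * (2 * (C1 * C1 * C1)) + 2 * C1 * (C2 + α * (2 * (C1 * C1))) := by
    refine (abs_sub _ _).trans (add_le_add ((abs_add_mul_le hα0).trans ?_) ?_)
    · rw [abs_mul, abs_two]
      gcongr
      exacts [abs_avg_le α g fun k => abs_mul_apply_le (hC1t k) (hC2t k),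
        abs_cov_le α g (fun k => abs_mul_apply_le (hC1t k) (hC1t k)) hC1t]
    · rw [abs_mul, abs_mul, abs_two]
      gcongr
  have hderiv : deriv (fun s => α * avg α g g1 s) =ᶠ[𝓝 t]
      fun s => α * (avg α g g2 s + α * cov α g g1 g1 s) :=
    eventually_of_mem (hI.mem_nhds ht) fun s hs =>
      (hasDerivAt_mean α (fun k => hg k s hs) (fun k => hg1 k s hs)).deriv
  refine ⟨?_, ?_, ?_⟩
  · rw [abs_mul, abs_of_nonneg hα0]
    gcongr
  · rw [hderiv.eq_of_nhds, abs_mul, abs_of_nonneg hα0]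
    calc α * |avg α g g2 t + α * cov α g g1 g1 t| ≤ α * (C2 + α * (2 * (C1 * C1))) := by gcongr
      _ ≤ α ^ 2 * (C2 + 2 * C1 ^ 2) := by
          nlinarith [mul_nonneg (mul_nonneg hα0 (sub_nonneg.2 hα)) hC2₀]
  · rw [hderiv.deriv_eq, (hasDerivAt_deriv_mean α (fun k => hg k t ht) (fun k => hg1 k t ht)
      (fun k => hg2 k t ht)).deriv, abs_mul, abs_of_nonneg hα0]
    calc _ ≤ α * (C3 + α * (2 * (C2 * C1) + (2 * (C1 * C2) + α * (2 * (C1 * C1 * C1))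
          + 2 * C1 * (C2 + α * (2 * (C1 * C1)))))) := by
          gcongr
          refine (abs_add_mul_le hα0).trans ?_
          gcongr
          · exact abs_avg_le α g fun k => hC3 k t ht
          · exact (abs_add_le _ _).trans (add_le_add (abs_cov_le α g hC2t hC1t) hvar)
      _ ≤ α ^ 3 * (C3 + 6 * C1 * C2 + 6 * C1 ^ 3) := by
          have hα3 : α ≤ α ^ 3 := le_self_pow₀ hα (by norm_num)
          have hα23 : α ^ 2 ≤ α ^ 3 := pow_le_pow_right₀ hα (by norm_num)
          nlinarith [mul_le_mul_of_nonneg_right hα3 hC3₀,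
            mul_le_mul_of_nonneg_right hα23 (mul_nonneg hC1₀ hC2₀)]

end Gibbs

open Function

lemma update_mem_pi {n : ℕ} {I : Set ℝ} {x : Fin n → ℝ} (hx : ∀ j, x j ∈ I) (i : Fin n) {t : ℝ}
    (ht : t ∈ I) (j : Fin n) : update x i t j ∈ I := by
  rcases eq_or_ne j i with rfl | hj
  · simpa using ht
  · simpa [update_of_ne hj] using hx j

lemma pderiv_update {n : ℕ} (F : (Fin n → ℝ) → ℝ) (i : Fin n) (p : ℕ) (x : Fin n → ℝ) (t : ℝ) :
    pderiv n F i p (update x i t) = iteratedDeriv p (fun s => F (update x i s)) t := by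
  simp [pderiv]

lemma CoordDiff3.hasDerivAt {n : ℕ} {I : Set ℝ} {F : (Fin n → ℝ) → ℝ} (hF : CoordDiff3 n I F)
    (hI : IsOpen I) {x : Fin n → ℝ} (hx : ∀ j, x j ∈ I) (i : Fin n) {p : ℕ} (hp : p < 3)
    {t : ℝ} (ht : t ∈ I) :
    HasDerivAt (iteratedDeriv p fun s => F (update x i s))
      (iteratedDeriv (p + 1) (fun s => F (update x i s)) t) t := by
  rw [iteratedDeriv_succ]
  exact ((hF i x hx p hp).differentiableAt (hI.mem_nhds ht)).hasDerivAt

lemma gibbsE_update {κ : Type} [Fintype κ] {n : ℕ} (f : κ → (Fin n → ℝ) → ℝ) (α : ℝ) (i : Fin n)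
    (x : Fin n → ℝ) (t : ℝ) :
    gibbsE n f α i (update x i t) = α * Gibbs.avg α (fun k s => f k (update x i s))
      (fun k => iteratedDeriv 1 fun s => f k (update x i s)) t := by
  simp only [gibbsE, Gibbs.avg, pderiv_update, mul_sum, mul_assoc]
  rfl

theorem stmt19_general
    {n : ℕ} {I : Set ℝ} (hIopen : IsOpen I)
    {κ : Type} [Fintype κ] [Nonempty κ]
    (f : κ → (Fin n → ℝ) → ℝ) (hf : ∀ k, CoordDiff3 n I (f k))
    (C1 C2 C3 : ℝ)
    (hC1 : ∀ (k : κ) (i : Fin n) (x : Fin n → ℝ), (∀ j, x j ∈ I) →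
      |pderiv n (f k) i 1 x| ≤ C1)
    (hC2 : ∀ (k : κ) (i : Fin n) (x : Fin n → ℝ), (∀ j, x j ∈ I) →
      |pderiv n (f k) i 2 x| ≤ C2)
    (hC3 : ∀ (k : κ) (i : Fin n) (x : Fin n → ℝ), (∀ j, x j ∈ I) →
      |pderiv n (f k) i 3 x| ≤ C3)
    (α : ℝ) (hα : 1 ≤ α)
    (i : Fin n) (x : Fin n → ℝ) (hx : ∀ j, x j ∈ I) :
    |gibbsE n f α i x| ≤ α * C1 ∧
    |pderiv n (gibbsE n f α i) i 1 x| ≤ α ^ 2 * (C2 + 2 * C1 ^ 2) ∧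
    |pderiv n (gibbsE n f α i) i 2 x| ≤
      α ^ 3 * (C3 + 6 * C1 * C2 + 6 * C1 ^ 3) := by
  have hslice := fun k p (hp : p < 3) t (ht : t ∈ I) => (hf k).hasDerivAt hIopen hx i hp ht
  obtain ⟨h0, h1, h2⟩ := Gibbs.abs_mean_derivatives_le α hIopen hα
    (g := fun k s => f k (update x i s))
    (fun k t ht => by simpa only [iteratedDeriv_zero] using hslice k 0 (by norm_num) t ht)
    (fun k t ht => hslice k 1 (by norm_num) t ht) (fun k t ht => hslice k 2 (by norm_num) t ht)
    (fun k t ht => by simpa [pderiv_update] using hC1 k i _ (update_mem_pi hx i ht))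
    (fun k t ht => by simpa [pderiv_update] using hC2 k i _ (update_mem_pi hx i ht))
    (fun k t ht => by simpa [pderiv_update] using hC3 k i _ (update_mem_pi hx i ht)) (hx i)
  have hE : (fun t => gibbsE n f α i (update x i t)) = _ := funext (gibbsE_update f α i x)
  refine ⟨?_, ?_, ?_⟩
  · rwa [← gibbsE_update, update_eq_self] at h0
  · rwa [pderiv, hE, iteratedDeriv_one]
  · rwa [pderiv, hE, iteratedDeriv_succ, iteratedDeriv_one]

theorem stmt19
    {n : ℕ} {I : Set ℝ} (hIopen : IsOpen I) (hIconn : I.OrdConnected)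
    (hI0 : (0 : ℝ) ∈ I)
    {κ : Type} [Fintype κ] [Nonempty κ]
    (f : κ → (Fin n → ℝ) → ℝ) (hf : ∀ k, CoordDiff3 n I (f k))
    (C1 C2 C3 : ℝ)
    (hC1 : ∀ (k : κ) (i : Fin n) (x : Fin n → ℝ), (∀ j, x j ∈ I) →
      |pderiv n (f k) i 1 x| ≤ C1)
    (hC2 : ∀ (k : κ) (i : Fin n) (x : Fin n → ℝ), (∀ j, x j ∈ I) →
      |pderiv n (f k) i 2 x| ≤ C2)
    (hC3 : ∀ (k : κ) (i : Fin n) (x : Fin n → ℝ), (∀ j, x j ∈ I) →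
      |pderiv n (f k) i 3 x| ≤ C3)
    (α : ℝ) (hα : 1 ≤ α)
    (i : Fin n) (x : Fin n → ℝ) (hx : ∀ j, x j ∈ I) :
    |gibbsE n f α i x| ≤ α * C1 ∧
    |pderiv n (gibbsE n f α i) i 1 x| ≤ α ^ 2 * (C2 + 2 * C1 ^ 2) ∧
    |pderiv n (gibbsE n f α i) i 2 x| ≤
      α ^ 3 * (C3 + 6 * C1 * C2 + 6 * C1 ^ 3) :=
  stmt19_general hIopen f hf C1 C2 C3 hC1 hC2 hC3 α hα i x hx
end
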